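/- arXiv:2004.00891 — 2 statements merged into one kernel-verified Lean document; each statement's English description precedes it below -/
import Mathlib

section
/- If the stationary process (X_t)_{t∈ℤ} is ergodic (i.e., identifying the process with the coordinate projections on the canonical space E^ℤ carrying the law of the process, the left-shift transformation is an ergodic measure-preserving transformation), then for every fixed time lag η ∈ ℕ the empirical autocovariance operators converge: C_n(η) → C(η) as n → ∞, P-almost everywhere, with respect to the Hilbert–Schmidt norm on HS(𝓗). -/
/- Strong law of large numbers for empirical kernel autocovariance operators of a
stationary ergodic process.  The RKHS `H` is embedded via the feature map `φ`,
and the space of Hilbert–Schmidt operators HS(H) is modeled by an abstract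
Hilbert space `W` together with a continuous bilinear map `tensor` satisfying
the characteristic inner-product identity
`⟪a ⊗ b, c ⊗ d⟫ = ⟪a, c⟫ * ⟪b, d⟫` of rank-one operators. -/

open MeasureTheory Filter
open scoped RealInnerProductSpace Topology ENNReal

set_option linter.unusedSectionVars false
set_option maxHeartbeats 1000000

open MeasureTheory Filter
open scoped Topology

namespace AutocovAux

variable {α : Type*} [MeasurableSpace α] {μ : Measure α} [IsProbabilityMeasure μ] {T : α → α}

lemma integrable_comp_iterate (hT : MeasurePreserving T μ μ) {β : Type*} [NormedAddCommGroup β]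
    {g : α → β} (hg : Integrable g μ) (k : ℕ) : Integrable (fun x => g (T^[k] x)) μ :=
  ((hT.iterate k).integrable_comp hg.aestronglyMeasurable).mpr hg

lemma integrable_birkhoffSum (hT : MeasurePreserving T μ μ) {β : Type*} [NormedAddCommGroup β]
    {g : α → β} (hg : Integrable g μ) (n : ℕ) : Integrable (birkhoffSum T g n) μ := by
  have : birkhoffSum T g n = fun x => ∑ k ∈ Finset.range n, g (T^[k] x) := rfl
  rw [this]
  exact integrable_finset_sum _ (fun k _ => integrable_comp_iterate hT hg k)

lemma integral_comp_mp (hT : MeasurePreserving T μ μ) {β : Type*} [NormedAddCommGroup β]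
    [NormedSpace ℝ β] {g : α → β} (hg : AEStronglyMeasurable g μ) :
    ∫ x, g (T x) ∂μ = ∫ x, g x ∂μ := by
  conv_rhs => rw [← hT.map_eq]
  rw [integral_map hT.measurable.aemeasurable]
  rw [hT.map_eq]; exact hg

/-- Running maximum of Birkhoff sums, `max_{0 ≤ n ≤ N} S_n f x`; always `≥ 0`. -/
noncomputable def maxSum (T : α → α) (f : α → ℝ) (N : ℕ) (x : α) : ℝ :=
  (Finset.range (N + 1)).sup' (Finset.nonempty_range_iff.mpr (Nat.succ_ne_zero N))
    (fun n => birkhoffSum T f n x)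

lemma maxSum_nonneg (f : α → ℝ) (N : ℕ) (x : α) : 0 ≤ maxSum T f N x := by
  have h0 : birkhoffSum T f 0 x = 0 := birkhoffSum_zero T f x
  rw [← h0]
  exact Finset.le_sup' (fun n => birkhoffSum T f n x) (Finset.mem_range.mpr (Nat.succ_pos N))

lemma le_maxSum (f : α → ℝ) (N : ℕ) (x : α) {n : ℕ} (hn : n ≤ N) :
    birkhoffSum T f n x ≤ maxSum T f N x :=
  Finset.le_sup' (fun n => birkhoffSum T f n x) (Finset.mem_range.mpr (Nat.lt_succ_of_le hn))

lemma maxSum_measurable (hTm : Measurable T) {f : α → ℝ} (hf : Measurable f) (N : ℕ) :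
    Measurable (maxSum T f N) := by
  have h := Finset.measurable_sup' (α := ℝ)
    (Finset.nonempty_range_iff.mpr (Nat.succ_ne_zero N)) (f := fun n (x : α) => birkhoffSum T f n x)
    (fun n _ => Finset.measurable_sum _ (fun k _ => hf.comp (hTm.iterate k)))
  unfold maxSum
  convert h using 1
  funext x
  exact (Finset.sup'_apply _ _ _).symm

lemma maxSum_integrable (hT : MeasurePreserving T μ μ) {f : α → ℝ} (hfm : Measurable f)
    (hf : Integrable f μ) (N : ℕ) : Integrable (maxSum T f N) μ := by
  refine Integrable.mono' (g := fun x => ∑ n ∈ Finset.range (N+1), |birkhoffSum T f n x|) ?_ ?_ ?_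
  · exact integrable_finset_sum _ (fun n _ => (integrable_birkhoffSum hT hf n).abs)
  · exact (maxSum_measurable hT.measurable hfm N).aestronglyMeasurable
  · refine Eventually.of_forall fun x => ?_
    rw [Real.norm_eq_abs, abs_of_nonneg (maxSum_nonneg f N x)]
    obtain ⟨n, hn, heq⟩ := Finset.exists_mem_eq_sup' _ (fun n => birkhoffSum T f n x)
    have : maxSum T f N x = birkhoffSum T f n x := heq
    rw [this]
    exact (le_abs_self _).trans
      (Finset.single_le_sum (f := fun n => |birkhoffSum T f n x|) (fun i _ => abs_nonneg _) hn)

/-- Key pointwise inequality for the maximal ergodic theorem. -/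
lemma maxSum_key {f : α → ℝ} {N : ℕ} {x : α} (h : 0 < maxSum T f N x) :
    maxSum T f N x ≤ f x + maxSum T f N (T x) := by
  obtain ⟨n, hn, heq⟩ := Finset.exists_mem_eq_sup' (s := Finset.range (N+1))
    (Finset.nonempty_range_iff.mpr (Nat.succ_ne_zero N)) (fun n => birkhoffSum T f n x)
  have hM : maxSum T f N x = birkhoffSum T f n x := heq
  rcases Nat.eq_zero_or_pos n with rfl | hpos
  · rw [hM, birkhoffSum_zero] at h; exact absurd h (lt_irrefl 0)
  · obtain ⟨m, rfl⟩ : ∃ m, n = m + 1 := ⟨n - 1, (Nat.succ_pred_eq_of_pos hpos).symm⟩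
    rw [hM, birkhoffSum_succ']
    have : birkhoffSum T f m (T x) ≤ maxSum T f N (T x) :=
      le_maxSum f N (T x) (Nat.lt_succ_iff.mp (Nat.lt_of_succ_lt (Finset.mem_range.mp hn)))
    linarith

/-- Maximal ergodic theorem (Garsia's proof). -/
lemma maximal_ergodic (hT : MeasurePreserving T μ μ) {f : α → ℝ} (hfm : Measurable f)
    (hf : Integrable f μ) (N : ℕ) :
    0 ≤ ∫ x in {x | 0 < maxSum T f N x}, f x ∂μ := by
  set M := maxSum T f N with hMdef
  set A := {x | 0 < M x} with hAdef
  have hMm : Measurable M := maxSum_measurable hT.measurable hfm N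
  have hAm : MeasurableSet A := measurableSet_lt measurable_const hMm
  have hMint : Integrable M μ := maxSum_integrable hT hfm hf N
  have hMTint : Integrable (fun x => M (T x)) μ :=
    (hT.integrable_comp hMint.aestronglyMeasurable).mpr hMint
  have key : ∀ x ∈ A, M x - M (T x) ≤ f x := fun x hx => by
    have := maxSum_key (T := T) (f := f) (N := N) (x := x) hx
    linarith
  have h1 : ∫ x in A, (M x - M (T x)) ∂μ ≤ ∫ x in A, f x ∂μ :=
    setIntegral_mono_on ((hMint.sub hMTint).integrableOn) (hf.integrableOn) hAm key
  have h2 : ∫ x in A, (M x - M (T x)) ∂μ = ∫ x in A, M x ∂μ - ∫ x in A, M (T x) ∂μ :=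
    integral_sub hMint.integrableOn hMTint.integrableOn
  have h3 : ∫ x in A, M x ∂μ = ∫ x, M x ∂μ := by
    rw [← integral_add_compl hAm hMint]
    have : ∫ x in Aᶜ, M x ∂μ = 0 := by
      rw [setIntegral_congr_fun hAm.compl (g := fun _ => (0:ℝ))
        (fun x hx => le_antisymm (not_lt.mp hx) (maxSum_nonneg f N x))]
      simp
    rw [this, add_zero]
  have h4 : ∫ x in A, M (T x) ∂μ ≤ ∫ x, M (T x) ∂μ :=
    setIntegral_le_integral hMTint (Eventually.of_forall fun x => maxSum_nonneg f N (T x))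
  have h5 : ∫ x, M (T x) ∂μ = ∫ x, M x ∂μ := integral_comp_mp hT hMint.aestronglyMeasurable
  linarith





lemma birkhoffSum_sub_const (T : α → α) (f : α → ℝ) (q : ℝ) (n : ℕ) (x : α) :
    birkhoffSum T (fun y => f y - q) n x = birkhoffSum T f n x - n * q := by
  unfold birkhoffSum
  rw [Finset.sum_sub_distrib, Finset.sum_const, Finset.card_range, nsmul_eq_mul]

lemma birkhoffSum_neg' (T : α → α) (f : α → ℝ) (n : ℕ) (x : α) :
    birkhoffSum T (fun y => -f y) n x = -birkhoffSum T f n x := by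
  unfold birkhoffSum
  rw [← Finset.sum_neg_distrib]

lemma birkhoffSum_measurable (hTm : Measurable T) {f : α → ℝ} (hf : Measurable f) (n : ℕ) :
    Measurable (birkhoffSum T f n) :=
  Finset.measurable_sum _ (fun k _ => hf.comp (hTm.iterate k))

/-- The "frequently above slope `q`" set. -/
def freqSet (T : α → α) (f : α → ℝ) (q : ℝ) : Set α :=
  {x | ∃ q' : ℚ, q < (q' : ℝ) ∧ ∃ᶠ n : ℕ in atTop, (n : ℝ) * (q' : ℝ) < birkhoffSum T f n x}

lemma freqSet_measurable (hTm : Measurable T) {f : α → ℝ} (hf : Measurable f) (q : ℝ) :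
    MeasurableSet (freqSet T f q) := by
  have : freqSet T f q = ⋃ q' : ℚ, ⋃ _h : q < (q' : ℝ),
      ⋂ N : ℕ, ⋃ n : ℕ, ⋃ _h2 : N ≤ n, {x | (n : ℝ) * (q' : ℝ) < birkhoffSum T f n x} := by
    ext x
    simp only [freqSet, Set.mem_setOf_eq, Set.mem_iUnion, Set.mem_iInter, frequently_atTop]
    exact ⟨fun ⟨q', h1, h2⟩ => ⟨q', h1, fun N => by
        obtain ⟨n, hn, hn2⟩ := h2 N; exact ⟨n, hn, hn2⟩⟩,
      fun ⟨q', h1, h2⟩ => ⟨q', h1, fun N => by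
        obtain ⟨n, hn, hn2⟩ := h2 N; exact ⟨n, hn, hn2⟩⟩⟩
  rw [this]
  refine MeasurableSet.iUnion fun q' => MeasurableSet.iUnion fun _ =>
    MeasurableSet.iInter fun N => MeasurableSet.iUnion fun n => MeasurableSet.iUnion fun _ => ?_
  exact measurableSet_lt measurable_const (birkhoffSum_measurable hTm hf n)

lemma freqSet_invariant (T : α → α) (f : α → ℝ) (q : ℝ) :
    T ⁻¹' (freqSet T f q) = freqSet T f q := by
  ext x
  simp only [Set.mem_preimage, freqSet, Set.mem_setOf_eq]
  constructor
  · -- T x ∈ freqSet → x ∈ freqSet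
    rintro ⟨q', hq', hfreq⟩
    obtain ⟨q'', hq''₁, hq''₂⟩ := exists_rat_btwn hq'
    refine ⟨q'', hq''₁, ?_⟩
    have hev : ∀ᶠ n : ℕ in atTop, ((n : ℝ) + 1) * (q'' : ℝ) ≤ (n : ℝ) * (q' : ℝ) + f x := by
      have h1 : Tendsto (fun n : ℕ => (n : ℝ) * ((q' : ℝ) - (q'' : ℝ))) atTop atTop :=
        Tendsto.atTop_mul_const (by linarith) tendsto_natCast_atTop_atTop
      filter_upwards [h1.eventually_ge_atTop ((q'' : ℝ) - f x)] with n hn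
      nlinarith
    rw [frequently_atTop]
    intro N
    obtain ⟨n, hn, hlt⟩ := frequently_atTop.mp (hfreq.and_eventually hev) N
    refine ⟨n + 1, le_trans hn (Nat.le_succ n), ?_⟩
    rw [birkhoffSum_succ']
    push_cast
    calc ((n : ℝ) + 1) * (q'' : ℝ) ≤ (n : ℝ) * (q' : ℝ) + f x := hlt.2
    _ < birkhoffSum T f n (T x) + f x := by linarith [hlt.1]
    _ = f x + birkhoffSum T f n (T x) := by ring
  · -- x ∈ freqSet → T x ∈ freqSet
    rintro ⟨q', hq', hfreq⟩
    obtain ⟨q'', hq''₁, hq''₂⟩ := exists_rat_btwn hq'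
    refine ⟨q'', hq''₁, ?_⟩
    have hev : ∀ᶠ n : ℕ in atTop, ((n : ℝ) - 1) * (q'' : ℝ) ≤ (n : ℝ) * (q' : ℝ) - f x ∧ 1 ≤ n := by
      have h1 : Tendsto (fun n : ℕ => (n : ℝ) * ((q' : ℝ) - (q'' : ℝ))) atTop atTop :=
        Tendsto.atTop_mul_const (by linarith) tendsto_natCast_atTop_atTop
      filter_upwards [h1.eventually_ge_atTop (f x - (q'' : ℝ)), eventually_ge_atTop 1] with n hn hn1
      refine ⟨by nlinarith, hn1⟩
    rw [frequently_atTop]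
    intro N
    obtain ⟨n, hn, hlt⟩ := frequently_atTop.mp (hfreq.and_eventually hev) (N + 1)
    obtain ⟨hlt1, hlt2, hn1⟩ := hlt
    obtain ⟨m, rfl⟩ : ∃ m, n = m + 1 := ⟨n - 1, (Nat.succ_pred_eq_of_pos hn1).symm⟩
    refine ⟨m, by omega, ?_⟩
    have hsucc : birkhoffSum T f (m + 1) x = f x + birkhoffSum T f m (T x) :=
      birkhoffSum_succ' T f m x
    have : ((m : ℝ) + 1) * (q' : ℝ) < f x + birkhoffSum T f m (T x) := by
      rw [← hsucc]; push_cast at hlt1 ⊢; exact hlt1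
    have h2 : ((m : ℝ) + 1 - 1) * (q'' : ℝ) ≤ ((m : ℝ) + 1) * (q' : ℝ) - f x := by
      push_cast at hlt2 ⊢; exact hlt2
    push_cast
    nlinarith


lemma maxSum_mono (T : α → α) (f : α → ℝ) {N M : ℕ} (h : N ≤ M) (x : α) :
    maxSum T f N x ≤ maxSum T f M x := by
  apply Finset.sup'_le
  intro n hn
  exact le_maxSum f M x (Nat.lt_succ_iff.mp (Finset.mem_range.mp hn) |>.trans h)

lemma freqSet_null (hT : Ergodic T μ) {f : α → ℝ} (hfm : Measurable f) (hf : Integrable f μ)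
    {q : ℝ} (hq : ∫ x, f x ∂μ < q) : μ (freqSet T f q) = 0 := by
  rcases hT.ae_empty_or_univ (freqSet_measurable hT.toMeasurePreserving.measurable hfm q)
      (freqSet_invariant T f q) with h | h
  · exact ae_eq_empty.mp h
  · exfalso
    set g : α → ℝ := fun y => f y - q with hgdef
    have hgm : Measurable g := hfm.sub measurable_const
    have hgi : Integrable g μ := hf.sub (integrable_const q)
    set B : ℕ → Set α := fun N => {x | 0 < maxSum T g N x} with hBdef
    have hBm : ∀ N, MeasurableSet (B N) := fun N =>
      measurableSet_lt measurable_const (maxSum_measurable hT.toMeasurePreserving.measurable hgm N)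
    have hmono : Monotone B := fun N M hNM x hx =>
      lt_of_lt_of_le hx (maxSum_mono T g hNM x)
    have hsub : freqSet T f q ⊆ ⋃ N, B N := by
      rintro x ⟨q', hq', hfreq⟩
      obtain ⟨n, hn1, hlt⟩ := frequently_atTop.mp hfreq 1
      refine Set.mem_iUnion.mpr ⟨n, ?_⟩
      have h1 : birkhoffSum T g n x = birkhoffSum T f n x - (n : ℝ) * q :=
        birkhoffSum_sub_const T f q n x
      have hn1' : (1 : ℝ) ≤ (n : ℝ) := by exact_mod_cast hn1
      have h2 : 0 < birkhoffSum T g n x := by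
        have : (n : ℝ) * q < (n : ℝ) * (q' : ℝ) := by nlinarith
        rw [h1]; linarith
      exact lt_of_lt_of_le h2 (le_maxSum g n x le_rfl)
    have hU : MeasurableSet (⋃ N, B N) := MeasurableSet.iUnion hBm
    have hUone : μ (⋃ N, B N) = 1 := by
      have h1 : μ (freqSet T f q) = 1 := by
        rw [measure_congr h, measure_univ]
      refine le_antisymm (prob_le_one) ?_
      rw [← h1]
      exact measure_mono hsub
    have htend := tendsto_setIntegral_of_monotone hBm hmono hgi.integrableOn
    have hge : 0 ≤ ∫ x in ⋃ N, B N, g x ∂μ :=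
      ge_of_tendsto htend (Eventually.of_forall fun N => maximal_ergodic hT.toMeasurePreserving hgm hgi N)
    have hcompl : μ (⋃ N, B N)ᶜ = 0 := by
      rw [measure_compl hU (measure_ne_top μ _), hUone, measure_univ]
      simp
    have hint : ∫ x in ⋃ N, B N, g x ∂μ = ∫ x, g x ∂μ := by
      conv_rhs => rw [← integral_add_compl hU hgi]
      rw [Measure.restrict_eq_zero.mpr hcompl, integral_zero_measure, add_zero]
    have hgval : ∫ x, g x ∂μ = (∫ x, f x ∂μ) - q := by
      rw [hgdef, integral_sub hf (integrable_const q), integral_const, probReal_univ]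
      simp
    rw [hint, hgval] at hge
    linarith

lemma birkhoff_upper (hT : Ergodic T μ) {f : α → ℝ} (hfm : Measurable f) (hf : Integrable f μ) :
    ∀ᵐ x ∂μ, ∀ r : ℝ, (∫ x, f x ∂μ) < r → ∀ᶠ n : ℕ in atTop, birkhoffSum T f n x ≤ (n : ℝ) * r := by
  have hae : ∀ᵐ x ∂μ, ∀ q : ℚ, (∫ x, f x ∂μ) < (q : ℝ) → x ∉ freqSet T f (q : ℝ) := by
    rw [ae_all_iff]
    intro q
    by_cases hq : (∫ x, f x ∂μ) < (q : ℝ)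
    · have := freqSet_null hT hfm hf hq
      filter_upwards [measure_eq_zero_iff_ae_notMem.mp this] with x hx
      exact fun _ => hx
    · filter_upwards with x hx
      exact absurd hx hq
  filter_upwards [hae] with x hx r hr
  obtain ⟨q, hq1, hq2⟩ := exists_rat_btwn hr
  obtain ⟨q', hq'1, hq'2⟩ := exists_rat_btwn hq2
  have hnot : ¬ ∃ᶠ n : ℕ in atTop, (n : ℝ) * (q' : ℝ) < birkhoffSum T f n x := by
    intro hfreq
    exact hx q hq1 ⟨q', by exact_mod_cast hq'1, hfreq⟩
  rw [not_frequently] at hnot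
  filter_upwards [hnot] with n hn
  rw [not_lt] at hn
  calc birkhoffSum T f n x ≤ (n : ℝ) * (q' : ℝ) := hn
  _ ≤ (n : ℝ) * r := by
      have : (0:ℝ) ≤ (n : ℝ) := Nat.cast_nonneg n
      nlinarith

/-- Birkhoff's pointwise ergodic theorem, real-valued, ergodic case. -/
lemma birkhoff_real (hT : Ergodic T μ) {f : α → ℝ} (hfm : Measurable f) (hf : Integrable f μ) :
    ∀ᵐ x ∂μ, Tendsto (fun n : ℕ => (n : ℝ)⁻¹ * birkhoffSum T f n x) atTop
      (𝓝 (∫ x, f x ∂μ)) := by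
  have hneg := birkhoff_upper hT hfm.neg hf.neg
  have hnegint : ∫ x, -f x ∂μ = -∫ x, f x ∂μ := integral_neg f
  filter_upwards [birkhoff_upper hT hfm hf, hneg] with x hup hdown
  rw [tendsto_order]
  constructor
  · intro a ha
    set b := (a + ∫ x, f x ∂μ) / 2 with hb
    have hb1 : a < b := by rw [hb]; linarith
    have hb2 : b < ∫ x, f x ∂μ := by rw [hb]; linarith
    have : (∫ x, -f x ∂μ) < -b := by rw [hnegint]; linarith
    filter_upwards [hdown (-b) this, eventually_ge_atTop 1] with n hn hn1
    have hn' : (0:ℝ) < (n:ℝ) := by exact_mod_cast hn1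
    rw [show birkhoffSum T (-f) n x = -birkhoffSum T f n x from birkhoffSum_neg' T f n x] at hn
    have : (n : ℝ) * b ≤ birkhoffSum T f n x := by nlinarith
    calc a < b := hb1
    _ = (n:ℝ)⁻¹ * ((n:ℝ) * b) := by field_simp
    _ ≤ (n:ℝ)⁻¹ * birkhoffSum T f n x := by
        apply mul_le_mul_of_nonneg_left this (by positivity)
  · intro a ha
    set b := ((∫ x, f x ∂μ) + a) / 2 with hb
    have hb1 : b < a := by rw [hb]; linarith
    have hb2 : (∫ x, f x ∂μ) < b := by rw [hb]; linarith
    filter_upwards [hup b hb2, eventually_ge_atTop 1] with n hn hn1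
    have hn' : (0:ℝ) < (n:ℝ) := by exact_mod_cast hn1
    calc (n:ℝ)⁻¹ * birkhoffSum T f n x ≤ (n:ℝ)⁻¹ * ((n:ℝ) * b) := by
          apply mul_le_mul_of_nonneg_left hn (by positivity)
    _ = b := by field_simp
    _ < a := hb1

section Vector

variable {V : Type*} [NormedAddCommGroup V] [NormedSpace ℝ V] [CompleteSpace V]

lemma birkhoff_indicator (hT : Ergodic T μ) {s : Set α} (hs : MeasurableSet s) (c : V) :
    ∀ᵐ x ∂μ, Tendsto (fun n : ℕ => (n : ℝ)⁻¹ • birkhoffSum T (s.indicator fun _ => c) n x)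
      atTop (𝓝 (∫ x, s.indicator (fun _ => c) x ∂μ)) := by
  have hrm : Measurable (s.indicator (fun _ => (1:ℝ))) := (measurable_const).indicator hs
  have hri : Integrable (s.indicator fun _ => (1:ℝ)) μ := (integrable_const 1).indicator hs
  filter_upwards [birkhoff_real hT hrm hri] with x hx
  have key : ∀ n : ℕ, birkhoffSum T (s.indicator fun _ => c) n x
      = (birkhoffSum T (s.indicator fun _ => (1:ℝ)) n x) • c := by
    intro n
    unfold birkhoffSum
    rw [Finset.sum_smul]
    refine Finset.sum_congr rfl fun k _ => ?_
    by_cases h : T^[k] x ∈ s <;> simp [Set.indicator, h]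
  have htend : Tendsto
      (fun n : ℕ => ((n:ℝ)⁻¹ * birkhoffSum T (s.indicator fun _ => (1:ℝ)) n x) • c) atTop
      (𝓝 ((∫ x, s.indicator (fun _ => (1:ℝ)) x ∂μ) • c)) := hx.smul_const c
  have heq : ∫ x, s.indicator (fun _ => c) x ∂μ
      = (∫ x, s.indicator (fun _ => (1:ℝ)) x ∂μ) • c := by
    rw [integral_indicator_const (1:ℝ) hs, integral_indicator_const c hs, smul_assoc, one_smul]
  rw [heq]
  refine htend.congr fun n => ?_
  rw [key n, smul_smul]

lemma birkhoff_simple (hT : Ergodic T μ) (h : SimpleFunc α V) :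
    ∀ᵐ x ∂μ, Tendsto (fun n : ℕ => (n : ℝ)⁻¹ • birkhoffSum T (⇑h) n x) atTop
      (𝓝 (∫ x, h x ∂μ)) := by
  induction h using SimpleFunc.induction with
  | const c hs =>
    rename_i s
    have : ⇑(SimpleFunc.piecewise s hs (SimpleFunc.const α c) (SimpleFunc.const α 0))
        = Set.indicator s (fun _ => c) := by
      ext y
      classical
      rw [Set.indicator_apply]
      simp [SimpleFunc.piecewise_apply]
    rw [this]
    exact birkhoff_indicator hT hs c
  | add hdisj hf hg =>
    rename_i f g
    filter_upwards [hf, hg] with x hfx hgx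
    have hco : ⇑(f + g) = ⇑f + ⇑g := SimpleFunc.coe_add f g
    have hsum : ∀ n : ℕ, birkhoffSum T (⇑(f + g)) n x
        = birkhoffSum T (⇑f) n x + birkhoffSum T (⇑g) n x := by
      intro n
      unfold birkhoffSum
      rw [← Finset.sum_add_distrib]
      refine Finset.sum_congr rfl fun k _ => by rw [hco]; rfl
    have hint : ∫ x, (f + g) x ∂μ = (∫ x, f x ∂μ) + ∫ x, g x ∂μ := by
      simp only [hco, Pi.add_apply]
      exact integral_add f.integrable_of_isFiniteMeasure g.integrable_of_isFiniteMeasure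
    rw [hint]
    have := hfx.add hgx
    refine this.congr fun n => ?_
    rw [hsum n, smul_add]

/-- Birkhoff's pointwise ergodic theorem, vector-valued, ergodic case. -/
lemma birkhoff_vector (hT : Ergodic T μ) {g : α → V} (hgm : StronglyMeasurable g)
    (hg : Integrable g μ) :
    ∀ᵐ x ∂μ, Tendsto (fun n : ℕ => (n : ℝ)⁻¹ • birkhoffSum T g n x) atTop
      (𝓝 (∫ x, g x ∂μ)) := by
  have hmem : MemLp g 1 μ := memLp_one_iff_integrable.mpr hg
  have hch : ∀ k : ℕ, ∃ h : SimpleFunc α V,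
      eLpNorm (g - ⇑h) 1 μ < ENNReal.ofReal (1 / (k + 1)) ∧ MemLp (⇑h) 1 μ := by
    intro k
    refine hmem.exists_simpleFunc_eLpNorm_sub_lt ENNReal.one_ne_top ?_
    simp only [ne_eq, ENNReal.ofReal_eq_zero, not_le]
    positivity
  choose h hh1 hh2 using hch
  have hhint : ∀ k, Integrable (⇑(h k)) μ := fun k => memLp_one_iff_integrable.mp (hh2 k)
  have hdint : ∀ k, Integrable (fun x => g x - h k x) μ := fun k => hg.sub (hhint k)
  have hd : ∀ k : ℕ, ∫ x, ‖g x - h k x‖ ∂μ < 1 / (k + 1) := by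
    intro k
    have h1 : ∫ x, ‖g x - h k x‖ ∂μ = (eLpNorm (g - ⇑(h k)) 1 μ).toReal := by
      rw [integral_norm_eq_lintegral_enorm (hdint k).aestronglyMeasurable,
        eLpNorm_one_eq_lintegral_enorm]
      rfl
    rw [h1]
    have h2 := ENNReal.toReal_lt_toReal (ne_top_of_lt (hh1 k)) ENNReal.ofReal_ne_top |>.mpr (hh1 k)
    rwa [ENNReal.toReal_ofReal (by positivity)] at h2
  have hnm : ∀ k, Measurable (fun x => ‖g x - h k x‖) := fun k =>
    ((hgm.sub (h k).stronglyMeasurable).norm).measurable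
  filter_upwards [ae_all_iff.mpr (fun k => birkhoff_simple hT (h k)),
    ae_all_iff.mpr (fun k => birkhoff_real hT (hnm k) ((hdint k).norm))] with x hx1 hx2
  rw [Metric.tendsto_atTop]
  intro ε hε
  obtain ⟨k, hk⟩ := exists_nat_ge (3 / ε)
  have hk3 : 3 / ((k : ℝ) + 1) < ε := by
    rw [div_lt_iff₀ (by positivity)]
    have : 3 / ε < (k : ℝ) + 1 := lt_of_le_of_lt hk (lt_add_one _)
    rw [div_lt_iff₀ hε] at this
    linarith
  have e1 : ∀ᶠ n : ℕ in atTop,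
      ‖(n:ℝ)⁻¹ • birkhoffSum T (⇑(h k)) n x - ∫ x, h k x ∂μ‖ < 1 / (k + 1) := by
    have := Metric.tendsto_atTop.mp (hx1 k)
    obtain ⟨N, hN⟩ := this (1 / (k + 1)) (by positivity)
    filter_upwards [eventually_ge_atTop N] with n hn
    simpa [dist_eq_norm] using hN n hn
  have e2 : ∀ᶠ n : ℕ in atTop,
      (n:ℝ)⁻¹ * birkhoffSum T (fun x => ‖g x - h k x‖) n x < 1 / (k + 1) :=
    (hx2 k).eventually_lt_const (hd k)
  obtain ⟨N, hN⟩ := ((e1.and e2).and (eventually_ge_atTop 1)).exists_forall_of_atTop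
  refine ⟨N, fun n hn => ?_⟩
  obtain ⟨⟨he1, he2⟩, hn1⟩ := hN n hn
  rw [dist_eq_norm]
  have havg : ‖(n:ℝ)⁻¹ • birkhoffSum T g n x - (n:ℝ)⁻¹ • birkhoffSum T (⇑(h k)) n x‖
      ≤ (n:ℝ)⁻¹ * birkhoffSum T (fun x => ‖g x - h k x‖) n x := by
    rw [← smul_sub, norm_smul, Real.norm_eq_abs, abs_of_nonneg (by positivity)]
    refine mul_le_mul_of_nonneg_left ?_ (by positivity)
    unfold birkhoffSum
    rw [← Finset.sum_sub_distrib]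
    exact norm_sum_le _ _
  have hIdiff : ‖(∫ x, h k x ∂μ) - ∫ x, g x ∂μ‖ ≤ ∫ x, ‖g x - h k x‖ ∂μ := by
    rw [← integral_sub (hhint k) hg]
    refine (norm_integral_le_integral_norm _).trans ?_
    refine integral_mono ((hhint k).sub hg).norm (hdint k).norm fun y => ?_
    rw [norm_sub_rev]
  have t1 := norm_sub_le_norm_sub_add_norm_sub
    ((n:ℝ)⁻¹ • birkhoffSum T g n x) ((n:ℝ)⁻¹ • birkhoffSum T (⇑(h k)) n x) (∫ x, g x ∂μ)
  have t2 := norm_sub_le_norm_sub_add_norm_sub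
    ((n:ℝ)⁻¹ • birkhoffSum T (⇑(h k)) n x) (∫ x, h k x ∂μ) (∫ x, g x ∂μ)
  have h3 := hIdiff.trans_lt (hd k)
  have h4 := havg.trans_lt he2
  have hsum3 : (1:ℝ)/(k+1) + 1/(k+1) + 1/(k+1) = 3/((k:ℝ)+1) := by ring
  linarith

end Vector

end AutocovAux

open AutocovAux


theorem autocov_strong_law_of_large_numbers
    {Ω : Type*} [MeasurableSpace Ω] (P : Measure Ω) [IsProbabilityMeasure P]
    {E : Type*} [TopologicalSpace E] [PolishSpace E] [MeasurableSpace E] [BorelSpace E]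
    {H : Type*} [NormedAddCommGroup H] [InnerProductSpace ℝ H] [CompleteSpace H]
      [SecondCountableTopology H] [MeasurableSpace H] [BorelSpace H]
    {W : Type*} [NormedAddCommGroup W] [InnerProductSpace ℝ W] [CompleteSpace W]
      [SecondCountableTopology W]
    -- the stationary process
    (X : ℤ → Ω → E) (hXm : ∀ t, Measurable (X t))
    (hstat : ∀ (r : ℕ) (t : Fin r → ℤ) (s : ℤ),
      Measure.map (fun ω => fun i => X (t i) ω) P
        = Measure.map (fun ω => fun i => X (t i + s) ω) P)
    -- the feature map of the RKHS
    (φ : E → H) (hφ : Measurable φ)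
    -- `tensor y x` plays the role of the rank-one operator y ⊗ x ∈ HS(H) = W
    (tensor : H →L[ℝ] H →L[ℝ] W)
    (htensor : ∀ a b c d : H, ⟪tensor a b, tensor c d⟫ = ⟪a, c⟫ * ⟪b, d⟫)
    -- square integrability and centering of the embedded process
    (hL2 : MemLp (fun ω => φ (X 0 ω)) 2 P)
    (hcent : ∫ ω, φ (X 0 ω) ∂P = 0)
    -- ergodicity: the left shift on the canonical space E^ℤ carrying the law of
    -- the process is an ergodic measure-preserving transformation
    (hergodic : Ergodic (fun f : ℤ → E => fun t => f (t + 1))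
      (Measure.map (fun ω => fun t => X t ω) P))
    -- the time lag
    (η : ℕ) :
    ∀ᵐ ω ∂P, Tendsto
      (fun n : ℕ => (n : ℝ)⁻¹ • ∑ t ∈ Finset.Icc 1 n,
        tensor (φ (X ((t : ℤ) + (η : ℤ)) ω)) (φ (X (t : ℤ) ω)))
      atTop (𝓝 (∫ ω, tensor (φ (X (η : ℤ) ω)) (φ (X 0 ω)) ∂P)) := by
  classical
  set Ψ : Ω → (ℤ → E) := fun ω t => X t ω with hΨdef
  have hΨ : Measurable Ψ := measurable_pi_lambda _ hXm
  set T : (ℤ → E) → (ℤ → E) := fun f t => f (t + 1) with hTdef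
  set μ : Measure (ℤ → E) := Measure.map Ψ P with hμdef
  haveI : IsProbabilityMeasure μ := Measure.isProbabilityMeasure_map hΨ.aemeasurable
  set g : (ℤ → E) → W := fun f => tensor (φ (f (η : ℤ))) (φ (f 0)) with hgdef
  -- strong measurability of g
  have hcont : Continuous fun p : H × H => tensor p.1 p.2 :=
    isBoundedBilinearMap_apply.continuous.comp
      ((tensor.continuous.comp continuous_fst).prodMk continuous_snd)
  have hpm : Measurable fun f : ℤ → E => (φ (f (η : ℤ)), φ (f 0)) :=
    (hφ.comp (measurable_pi_apply _)).prodMk (hφ.comp (measurable_pi_apply _))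
  have hgsm : StronglyMeasurable g :=
    hcont.comp_stronglyMeasurable hpm.stronglyMeasurable
  -- the norm of g factorizes
  have hnorm : ∀ f : ℤ → E, ‖g f‖ = ‖φ (f (η : ℤ))‖ * ‖φ (f 0)‖ := by
    intro f
    have h1 : ‖g f‖ ^ 2 = (‖φ (f (η : ℤ))‖ * ‖φ (f 0)‖) ^ 2 := by
      rw [← real_inner_self_eq_norm_sq]
      rw [hgdef]
      simp only []
      rw [htensor, real_inner_self_eq_norm_sq, real_inner_self_eq_norm_sq]
      ring
    have h2 : (0:ℝ) ≤ ‖g f‖ := norm_nonneg _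
    have h3 : (0:ℝ) ≤ ‖φ (f (η : ℤ))‖ * ‖φ (f 0)‖ := by positivity
    calc ‖g f‖ = Real.sqrt (‖g f‖ ^ 2) := (Real.sqrt_sq h2).symm
    _ = Real.sqrt ((‖φ (f (η : ℤ))‖ * ‖φ (f 0)‖) ^ 2) := by rw [h1]
    _ = ‖φ (f (η : ℤ))‖ * ‖φ (f 0)‖ := Real.sqrt_sq h3
  -- the law of X η equals the law of X 0
  have hlaw : Measure.map (X (η : ℤ)) P = Measure.map (X 0) P := by
    have h := hstat 1 (fun _ => 0) (η : ℤ)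
    have he : Measurable fun v : Fin 1 → E => v 0 := measurable_pi_apply 0
    have h1 : Measure.map (fun v : Fin 1 → E => v 0)
        (Measure.map (fun ω => fun _ : Fin 1 => X 0 ω) P) = Measure.map (X 0) P := by
      rw [Measure.map_map he (measurable_pi_lambda _ fun _ => hXm 0)]
      rfl
    have h2 : Measure.map (fun v : Fin 1 → E => v 0)
        (Measure.map (fun ω => fun _ : Fin 1 => X ((0:ℤ) + (η:ℤ)) ω) P)
        = Measure.map (X ((0:ℤ) + (η:ℤ))) P := by
      rw [Measure.map_map he (measurable_pi_lambda _ fun _ => hXm _)]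
      rfl
    have h0η : ((0:ℤ) + (η:ℤ)) = (η:ℤ) := zero_add _
    rw [← h0η, ← h2, ← h, h1]
  -- MemLp facts under μ
  have hmem0 : MemLp (fun f : ℤ → E => φ (f 0)) 2 μ := by
    have hm : Measurable fun f : ℤ → E => φ (f 0) := hφ.comp (measurable_pi_apply 0)
    rw [hμdef, memLp_map_measure_iff hm.stronglyMeasurable.aestronglyMeasurable hΨ.aemeasurable]
    exact hL2
  have hmemηP : MemLp (fun ω => φ (X (η : ℤ) ω)) 2 P := by
    have h1 : MemLp (φ ∘ (X (η : ℤ))) 2 P ↔ MemLp φ 2 (Measure.map (X (η:ℤ)) P) :=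
      (memLp_map_measure_iff hφ.stronglyMeasurable.aestronglyMeasurable
        (hXm _).aemeasurable).symm
    rw [show (fun ω => φ (X (η : ℤ) ω)) = φ ∘ (X (η : ℤ)) from rfl, h1, hlaw,
      memLp_map_measure_iff hφ.stronglyMeasurable.aestronglyMeasurable (hXm 0).aemeasurable]
    exact hL2
  have hmemη : MemLp (fun f : ℤ → E => φ (f (η : ℤ))) 2 μ := by
    have hm : Measurable fun f : ℤ → E => φ (f (η : ℤ)) := hφ.comp (measurable_pi_apply _)
    rw [hμdef, memLp_map_measure_iff hm.stronglyMeasurable.aestronglyMeasurable hΨ.aemeasurable]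
    exact hmemηP
  -- integrability of g
  have hmul : Integrable (fun f : ℤ → E => ‖φ (f (η : ℤ))‖ * ‖φ (f 0)‖) μ := by
    have hpqr : (1 : ℝ≥0∞) / 1 = 1 / 2 + 1 / 2 := by
      rw [ENNReal.add_halves]; simp
    have := (hmem0.norm).smul (hmemη.norm) (r := 1)
    rw [memLp_one_iff_integrable] at this
    exact this.congr (Eventually.of_forall fun f => rfl)
  have hgint : Integrable g μ :=
    Integrable.mono' hmul hgsm.aestronglyMeasurable
      (Eventually.of_forall fun f => le_of_eq (hnorm f))
  -- Birkhoff
  have hbase := AutocovAux.birkhoff_vector (μ := μ) hergodic hgsm hgint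
  have hshift : ∀ᵐ x ∂μ, Tendsto (fun n : ℕ => (n:ℝ)⁻¹ • birkhoffSum T g n (T x)) atTop
      (𝓝 (∫ x, g x ∂μ)) := by
    have hmap : Measure.map T μ = μ := hergodic.toMeasurePreserving.map_eq
    have h2 : ∀ᵐ x ∂(Measure.map T μ), Tendsto (fun n : ℕ => (n:ℝ)⁻¹ • birkhoffSum T g n x)
        atTop (𝓝 (∫ x, g x ∂μ)) := by rw [hmap]; exact hbase
    exact ae_of_ae_map hergodic.toMeasurePreserving.measurable.aemeasurable h2
  have hP : ∀ᵐ ω ∂P, Tendsto (fun n : ℕ => (n:ℝ)⁻¹ • birkhoffSum T g n (T (Ψ ω))) atTop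
      (𝓝 (∫ x, g x ∂μ)) := ae_of_ae_map hΨ.aemeasurable hshift
  -- identify the limit
  have hI : ∫ x, g x ∂μ = ∫ ω, tensor (φ (X (η : ℤ) ω)) (φ (X 0 ω)) ∂P := by
    rw [hμdef, integral_map hΨ.aemeasurable hgsm.aestronglyMeasurable]
  -- iterates of the shift
  have hiter : ∀ (j : ℕ) (f : ℤ → E) (t : ℤ), (T^[j] f) t = f (t + j) := by
    intro j
    induction j with
    | zero => intro f t; simp
    | succ j ih =>
      intro f t
      rw [Function.iterate_succ_apply, ih (T f) t]
      show f (t + j + 1) = f (t + (j + 1 : ℕ))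
      congr 1
      push_cast
      ring
  rw [← hI]
  filter_upwards [hP] with ω hω
  refine hω.congr fun n => ?_
  congr 1
  -- sum identification
  rw [← Finset.Ico_add_one_right_eq_Icc, Finset.sum_Ico_eq_sum_range]
  unfold birkhoffSum
  refine Finset.sum_congr rfl fun k _ => ?_
  have hf' : ∀ t : ℤ, (T^[k] (T (Ψ ω))) t = X (t + k + 1) ω := by
    intro t
    rw [hiter k (T (Ψ ω)) t]
  show tensor (φ ((T^[k] (T (Ψ ω))) (η : ℤ))) (φ ((T^[k] (T (Ψ ω))) 0)) = _
  rw [hf' (η : ℤ), hf' 0]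
  have e1 : (η:ℤ) + (k:ℤ) + 1 = ((1 + k : ℕ) : ℤ) + (η:ℤ) := by push_cast; ring
  have e2 : (0:ℤ) + (k:ℤ) + 1 = ((1 + k : ℕ) : ℤ) := by push_cast; ring
  rw [e1, e2]
end

section
/- Suppose (X_t)_{t∈ℤ} is stationary and α-mixing, sup_{x∈E} k(x,x) = c < ∞, and ∑_{t=1}^∞ α(t−η) = M < ∞. Then the operator T := E[ξ₀ ⊗ ξ₀] + ∑_{t=1}^∞ E[ξ₀ ⊗ ξ_t] + ∑_{t=1}^∞ E[ξ_t ⊗ ξ₀] on HS(𝓗) satisfies the operator-norm bounds ‖E[ξ₀ ⊗ ξ₀]‖ ≤ 4c², ‖∑_{t=1}^∞ E[ξ_t ⊗ ξ₀]‖ ≤ 16c²M, ‖∑_{t=1}^∞ E[ξ₀ ⊗ ξ_t]‖ ≤ 16c²M, and hence ‖T‖ ≤ 4c² + 32c²M. -/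
/- Operator-norm bounds for the long-run covariance operator
`T = E[ξ₀⊗ξ₀] + ∑_{t≥1} E[ξ₀⊗ξ_t] + ∑_{t≥1} E[ξ_t⊗ξ₀]` on HS(H):
`‖E[ξ₀⊗ξ₀]‖ ≤ 4c²`, each series is bounded in norm by `16c²M`, and
`‖T‖ ≤ 4c² + 32c²M`, where `M = ∑_{t≥1} α(t−η)`. -/

open MeasureTheory Filter
open scoped RealInnerProductSpace Topology

/-- The α-mixing coefficient between two sub-σ-fields. -/
noncomputable def alphaMix {Ω : Type*} [MeasurableSpace Ω] (P : Measure Ω)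
    (m₁ m₂ : MeasurableSpace Ω) : ℝ :=
  ⨆ A : {s : Set Ω // MeasurableSet[m₁] s}, ⨆ B : {s : Set Ω // MeasurableSet[m₂] s},
    |(P (A.1 ∩ B.1)).toReal - (P A.1).toReal * (P B.1).toReal|

/-- The α-mixing coefficients of a process `Y`. -/
noncomputable def alphaProc {Ω E : Type*} [MeasurableSpace Ω] [MeasurableSpace E]
    (P : Measure Ω) (Y : ℤ → Ω → E) (n : ℤ) : ℝ :=
  alphaMix P (⨆ t : ℤ, ⨆ _ : t ≤ 0, MeasurableSpace.comap (Y t) inferInstance)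
    (⨆ t : ℤ, ⨆ _ : n ≤ t, MeasurableSpace.comap (Y t) inferInstance)

/-- The rank-one operator `y ⊗ x : z ↦ ⟪x, z⟫ • y` on a real Hilbert space. -/
noncomputable def rankOne {W : Type*} [NormedAddCommGroup W] [InnerProductSpace ℝ W]
    (y x : W) : W →L[ℝ] W :=
  (innerSL ℝ x).smulRight y

section
variable {Ω : Type*} [MeasurableSpace Ω] (P : Measure Ω)
  {E : Type*} [MeasurableSpace E]
  {H : Type*} [NormedAddCommGroup H] [InnerProductSpace ℝ H]
  {W : Type*} [NormedAddCommGroup W] [InnerProductSpace ℝ W] [CompleteSpace W]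
  (X : ℤ → Ω → E) (φ : E → H) (tensor : H →L[ℝ] H →L[ℝ] W) (η : ℤ)

/-- The kernel autocovariance operator `C(η) = E[φ(X_η) ⊗ φ(X_0)] ∈ HS(H)`. -/
noncomputable def Ceta : W := ∫ ω, tensor (φ (X η ω)) (φ (X 0 ω)) ∂P

/-- The centered embedded process `ξ_t = φ(X_{t+η}) ⊗ φ(X_t) − C(η)`. -/
noncomputable def xi (t : ℤ) (ω : Ω) : W :=
  tensor (φ (X (t + η) ω)) (φ (X t ω)) - Ceta P X φ tensor η

end

section Alpha
variable {Ω : Type*} {m₁ m₂ m0 : MeasurableSpace Ω} {P : Measure Ω} [IsProbabilityMeasure P]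

lemma prob_toReal_le_one (s : Set Ω) : (P s).toReal ≤ 1 :=
  ENNReal.toReal_le_of_le_ofReal one_pos.le (by simpa using prob_le_one)

lemma D_le_one (A B : Set Ω) :
    |(P (A ∩ B)).toReal - (P A).toReal * (P B).toReal| ≤ 1 := by
  have h1 : (P (A ∩ B)).toReal ≤ 1 := prob_toReal_le_one _
  have h2 : (P A).toReal ≤ 1 := prob_toReal_le_one _
  have h3 : (P B).toReal ≤ 1 := prob_toReal_le_one _
  have h4 : 0 ≤ (P (A ∩ B)).toReal := ENNReal.toReal_nonneg
  have h5 : 0 ≤ (P A).toReal := ENNReal.toReal_nonneg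
  have h6 : 0 ≤ (P B).toReal := ENNReal.toReal_nonneg
  rw [abs_le]; constructor <;> nlinarith

instance (m : MeasurableSpace Ω) : Nonempty {s : Set Ω // MeasurableSet[m] s} :=
  ⟨⟨∅, @MeasurableSet.empty _ m⟩⟩

lemma le_alphaMix {A B : Set Ω} (hA : MeasurableSet[m₁] A) (hB : MeasurableSet[m₂] B) :
    |(P (A ∩ B)).toReal - (P A).toReal * (P B).toReal| ≤ alphaMix P m₁ m₂ := by
  have hbdd : ∀ A' : {s : Set Ω // MeasurableSet[m₁] s},
      BddAbove (Set.range fun B' : {s : Set Ω // MeasurableSet[m₂] s} =>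
        |(P (A'.1 ∩ B'.1)).toReal - (P A'.1).toReal * (P B'.1).toReal|) := by
    intro A'
    refine ⟨1, ?_⟩
    rintro x ⟨B', rfl⟩
    exact D_le_one _ _
  calc |(P (A ∩ B)).toReal - (P A).toReal * (P B).toReal|
      ≤ ⨆ B' : {s : Set Ω // MeasurableSet[m₂] s},
          |(P (A ∩ B'.1)).toReal - (P A).toReal * (P B'.1).toReal| :=
        le_ciSup (hbdd ⟨A, hA⟩) ⟨B, hB⟩
    _ ≤ alphaMix P m₁ m₂ := by
        refine le_ciSup (f := fun A' : {s : Set Ω // MeasurableSet[m₁] s} =>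
          ⨆ B' : {s : Set Ω // MeasurableSet[m₂] s},
            |(P (A'.1 ∩ B'.1)).toReal - (P A'.1).toReal * (P B'.1).toReal|) ?_ ⟨A, hA⟩
        refine ⟨1, ?_⟩
        rintro x ⟨A', rfl⟩
        exact ciSup_le fun B' => D_le_one _ _

lemma alphaMix_le {x : ℝ} (h : ∀ A B : Set Ω, MeasurableSet[m₁] A → MeasurableSet[m₂] B →
    |(P (A ∩ B)).toReal - (P A).toReal * (P B).toReal| ≤ x) : alphaMix P m₁ m₂ ≤ x :=
  ciSup_le fun A' => ciSup_le fun B' => h _ _ A'.2 B'.2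

lemma alphaMix_nonneg : 0 ≤ alphaMix P m₁ m₂ :=
  (abs_nonneg _).trans (le_alphaMix (@MeasurableSet.empty _ m₁) (@MeasurableSet.empty _ m₂))

end Alpha

section Cov
variable {Ω : Type*} {m₁ m₂ m m0 : MeasurableSpace Ω} {P : Measure Ω} [IsProbabilityMeasure P]

/-- covariance of two real random variables -/
noncomputable def covP (P : Measure Ω) (U V : Ω → ℝ) : ℝ :=
  (∫ ω, U ω * V ω ∂P) - (∫ ω, U ω ∂P) * (∫ ω, V ω ∂P)

lemma covP_comm (U V : Ω → ℝ) : covP P U V = covP P V U := by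
  unfold covP
  simp_rw [mul_comm (U _) (V _)]
  ring

lemma integrable_of_bdd {U : Ω → ℝ} {a : ℝ} (hU : AEStronglyMeasurable U P)
    (hUa : ∀ ω, |U ω| ≤ a) : Integrable U P :=
  ⟨hU, HasFiniteIntegral.of_bounded (C := a) (ae_of_all _ fun ω => by
    simpa [Real.norm_eq_abs] using hUa ω)⟩

lemma covP_eq_integral_mul_sub {U V : Ω → ℝ} {a : ℝ} (hU : AEStronglyMeasurable U P)
    (hUa : ∀ ω, |U ω| ≤ a) (hV : Integrable V P) :
    covP P U V = ∫ ω, U ω * (V ω - ∫ x, V x ∂P) ∂P := by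
  have hUV : Integrable (fun ω => U ω * V ω) P :=
    hV.bdd_mul hU (ae_of_all _ fun ω => by simpa [Real.norm_eq_abs] using hUa ω)
  have hUc : Integrable (fun ω => U ω * ∫ x, V x ∂P) P :=
    (integrable_of_bdd hU hUa).mul_const _
  rw [show (fun ω => U ω * (V ω - ∫ x, V x ∂P)) =
      fun ω => U ω * V ω - U ω * ∫ x, V x ∂P by funext ω; ring]
  rw [integral_sub hUV hUc, integral_mul_const]
  unfold covP; ring

end Cov

section Half
variable {Ω : Type*} {m₁ m₂ m m0 : MeasurableSpace Ω} {P : Measure Ω} [IsProbabilityMeasure P]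

set_option linter.unusedSectionVars false

/-- difference of two indicator functions -/
noncomputable def indDiff (A B : Set Ω) : Ω → ℝ := fun ω =>
  A.indicator (fun _ => (1:ℝ)) ω - B.indicator (fun _ => (1:ℝ)) ω

/-- indicator-difference function attached to a function `f` -/
noncomputable def pmInd (f : Ω → ℝ) : Ω → ℝ :=
  indDiff {ω | 0 < f ω} {ω | f ω < 0}

lemma indDiff_abs_le {A B : Set Ω} (h : A ∩ B = ∅) (ω : Ω) : |indDiff A B ω| ≤ 1 := by
  unfold indDiff
  by_cases h1 : ω ∈ A <;> by_cases h2 : ω ∈ B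
  · exact absurd (Set.mem_inter h1 h2) (by simp [h])
  · simp [Set.indicator_apply, h1, h2]
  · simp [Set.indicator_apply, h1, h2]
  · simp [Set.indicator_apply, h1, h2]

lemma indDiff_stronglyMeasurable {A B : Set Ω} (hA : MeasurableSet[m] A)
    (hB : MeasurableSet[m] B) : StronglyMeasurable[m] (indDiff A B) :=
  ((stronglyMeasurable_const).indicator hA).sub ((stronglyMeasurable_const).indicator hB)

lemma pmInd_abs_le (f : Ω → ℝ) (ω : Ω) : |pmInd f ω| ≤ 1 := by
  unfold pmInd indDiff
  rcases lt_trichotomy (f ω) 0 with h | h | h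
  · simp [Set.indicator_apply, h, asymm h]
  · simp [Set.indicator_apply, h]
  · simp [Set.indicator_apply, h, asymm h]

lemma pmInd_mul (f : Ω → ℝ) (ω : Ω) : pmInd f ω * f ω = |f ω| := by
  unfold pmInd indDiff
  rcases lt_trichotomy (f ω) 0 with h | h | h
  · simp [Set.indicator_apply, h, asymm h, abs_of_neg h]
  · simp [Set.indicator_apply, h]
  · simp [Set.indicator_apply, h, asymm h, abs_of_pos h]

lemma pmInd_stronglyMeasurable {f : Ω → ℝ} (hf : StronglyMeasurable[m] f) :
    StronglyMeasurable[m] (pmInd f) := by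
  have h1 : MeasurableSet[m] {ω | 0 < f ω} := measurableSet_lt measurable_const hf.measurable
  have h2 : MeasurableSet[m] {ω | f ω < 0} := measurableSet_lt hf.measurable measurable_const
  exact indDiff_stronglyMeasurable h1 h2

/-- Half-step of Ibragimov's inequality via conditional expectation. -/
lemma halfstep (hm : m ≤ m0) {U V : Ω → ℝ} (hU : StronglyMeasurable[m] U) {a : ℝ}
    (hUa : ∀ ω, |U ω| ≤ a) (hV : Integrable V P) :
    ∃ A B : Set Ω, MeasurableSet[m] A ∧ MeasurableSet[m] B ∧ A ∩ B = ∅ ∧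
      |covP P U V| ≤ a * covP P (indDiff A B) V := by
  haveI : SigmaFinite (P.trim hm) := by infer_instance
  set c := ∫ x, V x ∂P with hc
  set V' : Ω → ℝ := fun ω => V ω - c with hV'def
  have hV' : Integrable V' P := hV.sub (integrable_const c)
  have hUsm0 : AEStronglyMeasurable U P := (hU.mono hm).aestronglyMeasurable
  set f := P[V' | m] with hfdef
  have hf_int : Integrable f P := integrable_condExp
  have hfm : StronglyMeasurable[m] f := stronglyMeasurable_condExp
  -- pull-out lemma
  have pull : ∀ (g : Ω → ℝ), StronglyMeasurable[m] g → ∀ (d : ℝ), (∀ ω, |g ω| ≤ d) →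
      ∫ ω, g ω * V' ω ∂P = ∫ ω, g ω * f ω ∂P := by
    intro g hg d hgd
    have h1 : P[g * V' | m] =ᵐ[P] g * P[V' | m] :=
      condExp_stronglyMeasurable_mul_of_bound hm hg hV' d
        (ae_of_all _ fun ω => by simpa [Real.norm_eq_abs] using hgd ω)
    calc ∫ ω, g ω * V' ω ∂P = ∫ ω, (g * V') ω ∂P := rfl
      _ = ∫ ω, (P[g * V' | m]) ω ∂P := (integral_condExp hm).symm
      _ = ∫ ω, (g * P[V' | m]) ω ∂P := integral_congr_ae h1
      _ = ∫ ω, g ω * f ω ∂P := rfl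
  set g := pmInd f with hgdef
  have hgm : StronglyMeasurable[m] g := pmInd_stronglyMeasurable hfm
  have hg1 : ∀ ω, |g ω| ≤ 1 := pmInd_abs_le f
  have hAm : MeasurableSet[m] {ω | 0 < f ω} := measurableSet_lt measurable_const hfm.measurable
  have hBm : MeasurableSet[m] {ω | f ω < 0} := measurableSet_lt hfm.measurable measurable_const
  have hdisj : {ω | 0 < f ω} ∩ {ω | f ω < 0} = ∅ := by
    ext ω; simp only [Set.mem_inter_iff, Set.mem_setOf_eq, Set.mem_empty_iff_false, iff_false]
    rintro ⟨h1, h2⟩; exact absurd (h1.trans h2) (lt_irrefl _)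
  have hgsm0 : AEStronglyMeasurable g P := (hgm.mono hm).aestronglyMeasurable
  have ha : 0 ≤ a := by
    have : Nonempty Ω := by
      rcases isEmpty_or_nonempty Ω with h | h
      · exfalso
        have h1 : P Set.univ = 1 := measure_univ
        rw [Set.univ_eq_empty_iff.mpr h] at h1
        simp at h1
      · exact h
    obtain ⟨ω⟩ := this
    exact (abs_nonneg _).trans (hUa ω)
  have hUf : Integrable (fun ω => U ω * f ω) P :=
    hf_int.bdd_mul hUsm0 (ae_of_all _ fun ω => by simpa [Real.norm_eq_abs] using hUa ω)
  refine ⟨{ω | 0 < f ω}, {ω | f ω < 0}, hAm, hBm, hdisj, ?_⟩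
  have step1 : |covP P U V| ≤ a * ∫ ω, |f ω| ∂P := by
    rw [covP_eq_integral_mul_sub hUsm0 hUa hV, ← hc]
    have h2 : ∫ ω, U ω * V' ω ∂P = ∫ ω, U ω * f ω ∂P := pull U hU a hUa
    calc |∫ ω, U ω * V' ω ∂P| = |∫ ω, U ω * f ω ∂P| := by rw [h2]
      _ ≤ ∫ ω, |U ω * f ω| ∂P := by
          have := norm_integral_le_integral_norm (fun ω => U ω * f ω) (μ := P)
          simpa only [Real.norm_eq_abs] using this
      _ ≤ ∫ ω, a * |f ω| ∂P := by
          refine integral_mono hUf.abs (hf_int.abs.const_mul a) fun ω => ?_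
          rw [abs_mul]
          exact mul_le_mul_of_nonneg_right (hUa ω) (abs_nonneg _)
      _ = a * ∫ ω, |f ω| ∂P := integral_const_mul a _
  have step2 : ∫ ω, |f ω| ∂P = covP P g V := by
    rw [covP_eq_integral_mul_sub hgsm0 hg1 hV, ← hc]
    have h3 : ∫ ω, g ω * V' ω ∂P = ∫ ω, g ω * f ω ∂P := pull g hgm 1 hg1
    rw [h3]
    exact integral_congr_ae (ae_of_all _ fun ω => (pmInd_mul f ω).symm)
  calc |covP P U V| ≤ a * ∫ ω, |f ω| ∂P := step1
    _ = a * covP P g V := by rw [step2]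

end Half

section Ibr
variable {Ω : Type*} {m₁ m₂ m m0 : MeasurableSpace Ω} {P : Measure Ω} [IsProbabilityMeasure P]
set_option linter.unusedSectionVars false

lemma ind_abs_le' (S : Set Ω) (ω : Ω) : |S.indicator (fun _ => (1:ℝ)) ω| ≤ 1 := by
  classical
  rw [Set.indicator_apply]; split_ifs <;> norm_num

lemma integral_ind_mul_ind {S T : Set Ω} (hS : MeasurableSet[m0] S) (hT : MeasurableSet[m0] T) :
    ∫ ω, S.indicator (fun _ => (1:ℝ)) ω * T.indicator (fun _ => (1:ℝ)) ω ∂P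
      = (P (S ∩ T)).toReal := by
  have hpt : ∀ ω, S.indicator (fun _ => (1:ℝ)) ω * T.indicator (fun _ => (1:ℝ)) ω
      = (S ∩ T).indicator (fun _ => (1:ℝ)) ω := by
    intro ω
    rw [← Set.inter_indicator_mul]
    simp
  simp_rw [hpt]
  rw [integral_indicator_const (1:ℝ) (hS.inter hT)]
  simp; rfl

lemma integral_ind {S : Set Ω} (hS : MeasurableSet[m0] S) :
    ∫ ω, S.indicator (fun _ => (1:ℝ)) ω ∂P = (P S).toReal := by
  rw [integral_indicator_const (1:ℝ) hS]; simp; rfl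

lemma covP_ind_abs_le {S T : Set Ω} (hm₁ : m₁ ≤ m0) (hm₂ : m₂ ≤ m0)
    (hS : MeasurableSet[m₂] S) (hT : MeasurableSet[m₁] T) :
    |covP P (S.indicator fun _ => (1:ℝ)) (T.indicator fun _ => (1:ℝ))| ≤ alphaMix P m₁ m₂ := by
  unfold covP
  rw [integral_ind_mul_ind (hm₂ _ hS) (hm₁ _ hT), integral_ind (hm₂ _ hS),
    integral_ind (hm₁ _ hT), Set.inter_comm, mul_comm]
  exact le_alphaMix hT hS

lemma covP_indDiff_le {A₁ A₂ B₁ B₂ : Set Ω} (hm₁ : m₁ ≤ m0) (hm₂ : m₂ ≤ m0)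
    (hA₁ : MeasurableSet[m₂] A₁) (hA₂ : MeasurableSet[m₂] A₂)
    (hB₁ : MeasurableSet[m₁] B₁) (hB₂ : MeasurableSet[m₁] B₂) :
    covP P (indDiff A₁ A₂) (indDiff B₁ B₂) ≤ 4 * alphaMix P m₁ m₂ := by
  set ι : Set Ω → Ω → ℝ := fun S => S.indicator fun _ => (1:ℝ) with hι
  have hIint : ∀ (S : Set Ω), MeasurableSet[m0] S → Integrable (ι S) P := fun S hS =>
    (integrable_const (1:ℝ)).indicator hS
  have hImul : ∀ (S T : Set Ω), MeasurableSet[m0] S → MeasurableSet[m0] T →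
      Integrable (fun ω => ι S ω * ι T ω) P := by
    intro S T hS hT
    exact (hIint T hT).bdd_mul (c := 1) ((hIint S hS)).aestronglyMeasurable
      (ae_of_all _ fun ω => by
        simp only [hι, Real.norm_eq_abs]
        exact ind_abs_le' S ω)
  have hA₁' := hm₂ _ hA₁; have hA₂' := hm₂ _ hA₂
  have hB₁' := hm₁ _ hB₁; have hB₂' := hm₁ _ hB₂
  have expand : covP P (indDiff A₁ A₂) (indDiff B₁ B₂)
      = covP P (ι A₁) (ι B₁) - covP P (ι A₁) (ι B₂) - covP P (ι A₂) (ι B₁)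
        + covP P (ι A₂) (ι B₂) := by
    unfold covP indDiff
    have e1 : ∀ ω, (A₁.indicator (fun _ => (1:ℝ)) ω - A₂.indicator (fun _ => (1:ℝ)) ω) *
        (B₁.indicator (fun _ => (1:ℝ)) ω - B₂.indicator (fun _ => (1:ℝ)) ω)
        = ι A₁ ω * ι B₁ ω - ι A₁ ω * ι B₂ ω - (ι A₂ ω * ι B₁ ω - ι A₂ ω * ι B₂ ω) := by
      intro ω; simp only [hι]; ring
    simp_rw [e1]
    rw [integral_sub
        (show Integrable (fun ω => ι A₁ ω * ι B₁ ω - ι A₁ ω * ι B₂ ω) P from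
          (hImul _ _ hA₁' hB₁').sub (hImul _ _ hA₁' hB₂'))
        (show Integrable (fun ω => ι A₂ ω * ι B₁ ω - ι A₂ ω * ι B₂ ω) P from
          (hImul _ _ hA₂' hB₁').sub (hImul _ _ hA₂' hB₂')),
      integral_sub (hImul _ _ hA₁' hB₁') (hImul _ _ hA₁' hB₂'),
      integral_sub (hImul _ _ hA₂' hB₁') (hImul _ _ hA₂' hB₂')]
    have e2 : ∀ ω, A₁.indicator (fun _ => (1:ℝ)) ω - A₂.indicator (fun _ => (1:ℝ)) ω
        = ι A₁ ω - ι A₂ ω := fun ω => rfl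
    have e3 : ∀ ω, B₁.indicator (fun _ => (1:ℝ)) ω - B₂.indicator (fun _ => (1:ℝ)) ω
        = ι B₁ ω - ι B₂ ω := fun ω => rfl
    simp_rw [e2, e3]
    rw [integral_sub (hIint _ hA₁') (hIint _ hA₂'), integral_sub (hIint _ hB₁') (hIint _ hB₂')]
    ring
  have k11 := abs_le.1 (covP_ind_abs_le hm₁ hm₂ hA₁ hB₁ (P := P))
  have k12 := abs_le.1 (covP_ind_abs_le hm₁ hm₂ hA₁ hB₂ (P := P))
  have k21 := abs_le.1 (covP_ind_abs_le hm₁ hm₂ hA₂ hB₁ (P := P))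
  have k22 := abs_le.1 (covP_ind_abs_le hm₁ hm₂ hA₂ hB₂ (P := P))
  rw [expand]
  simp only [hι] at *
  linarith [k11.1, k11.2, k12.1, k12.2, k21.1, k21.2, k22.1, k22.2]

/-- Ibragimov's covariance inequality. -/
lemma ibragimov (hm₁ : m₁ ≤ m0) (hm₂ : m₂ ≤ m0) {U V : Ω → ℝ}
    (hU : StronglyMeasurable[m₁] U) (hV : StronglyMeasurable[m₂] V) {a b : ℝ}
    (hUa : ∀ ω, |U ω| ≤ a) (hVb : ∀ ω, |V ω| ≤ b)
    (hU0 : ∫ ω, U ω ∂P = 0) (hV0 : ∫ ω, V ω ∂P = 0) :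
    |∫ ω, U ω * V ω ∂P| ≤ 4 * a * b * alphaMix P m₁ m₂ := by
  have hNe : Nonempty Ω := by
    rcases isEmpty_or_nonempty Ω with h | h
    · exfalso
      have h1 : P Set.univ = 1 := measure_univ
      rw [Set.univ_eq_empty_iff.mpr h] at h1
      simp at h1
    · exact h
  obtain ⟨ω₀⟩ := hNe
  have ha : 0 ≤ a := (abs_nonneg _).trans (hUa ω₀)
  have hb : 0 ≤ b := (abs_nonneg _).trans (hVb ω₀)
  have hVint : Integrable V P := integrable_of_bdd ((hV.mono hm₂).aestronglyMeasurable) hVb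
  obtain ⟨A₁, A₂, hA₁, hA₂, hAd, h1⟩ := halfstep hm₁ hU hUa hVint
  have hξm : StronglyMeasurable[m₁] (indDiff A₁ A₂) := indDiff_stronglyMeasurable hA₁ hA₂
  have hξ1 : ∀ ω, |indDiff A₁ A₂ ω| ≤ 1 := indDiff_abs_le hAd
  have hξint : Integrable (indDiff A₁ A₂) P :=
    integrable_of_bdd ((hξm.mono hm₁).aestronglyMeasurable) hξ1
  obtain ⟨B₁, B₂, hB₁, hB₂, hBd, h2⟩ := halfstep hm₂ hV hVb hξint
  -- h2 : |covP P V (indDiff A₁ A₂)| ≤ b * covP P (indDiff B₁ B₂) (indDiff A₁ A₂)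
  have h3 : covP P (indDiff B₁ B₂) (indDiff A₁ A₂) ≤ 4 * alphaMix P m₁ m₂ :=
    covP_indDiff_le hm₁ hm₂ hB₁ hB₂ hA₁ hA₂
  have h4 : covP P (indDiff A₁ A₂) V ≤ b * (4 * alphaMix P m₁ m₂) := by
    calc covP P (indDiff A₁ A₂) V = covP P V (indDiff A₁ A₂) := covP_comm _ _
      _ ≤ |covP P V (indDiff A₁ A₂)| := le_abs_self _
      _ ≤ b * covP P (indDiff B₁ B₂) (indDiff A₁ A₂) := h2
      _ ≤ b * (4 * alphaMix P m₁ m₂) := mul_le_mul_of_nonneg_left h3 hb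
  have h5 : |covP P U V| ≤ a * (b * (4 * alphaMix P m₁ m₂)) :=
    h1.trans (mul_le_mul_of_nonneg_left h4 ha)
  have h6 : covP P U V = ∫ ω, U ω * V ω ∂P := by
    unfold covP; rw [hU0]; ring
  rw [h6] at h5
  calc |∫ ω, U ω * V ω ∂P| ≤ a * (b * (4 * alphaMix P m₁ m₂)) := h5
    _ = 4 * a * b * alphaMix P m₁ m₂ := by ring

end Ibr

section Shift
variable {Ω : Type*} [mΩ : MeasurableSpace Ω] {E : Type*} [mE : MeasurableSpace E]
  (P : Measure Ω) [IsProbabilityMeasure P]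

lemma iSup_comap_eq (p : ℤ → Prop) (f : ℤ → Ω → E) :
    (⨆ i : ℤ, ⨆ _ : p i, MeasurableSpace.comap (f i) mE)
      = MeasurableSpace.comap (fun ω (i : Subtype p) => f i ω) MeasurableSpace.pi := by
  rw [show (MeasurableSpace.pi : MeasurableSpace (Subtype p → E))
      = ⨆ i : Subtype p, mE.comap (fun g => g i) from rfl, MeasurableSpace.comap_iSup]
  simp_rw [MeasurableSpace.comap_comp]
  rw [iSup_subtype]
  rfl

lemma path_law_shift (X : ℤ → Ω → E) (hXm : ∀ t, Measurable (X t))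
    (hstat : ∀ (r : ℕ) (t : Fin r → ℤ) (s : ℤ),
      Measure.map (fun ω => fun i => X (t i) ω) P
        = Measure.map (fun ω => fun i => X (t i + s) ω) P) (η : ℤ) :
    P.map (fun ω (s : ℤ) => X (s + η) ω) = P.map (fun ω (s : ℤ) => X s ω) := by
  have hJ : Measurable (fun ω (s : ℤ) => X s ω) := measurable_pi_lambda _ hXm
  have hJ' : Measurable (fun ω (s : ℤ) => X (s + η) ω) :=
    measurable_pi_lambda _ fun s => hXm (s + η)
  haveI : IsProbabilityMeasure (P.map (fun ω (s : ℤ) => X (s + η) ω)) :=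
    Measure.isProbabilityMeasure_map hJ'.aemeasurable
  refine ext_of_generate_finite (measurableCylinders (fun _ : ℤ => E))
    generateFrom_measurableCylinders.symm isPiSystem_measurableCylinders ?_ ?_
  swap
  · rw [Measure.map_apply hJ' MeasurableSet.univ, Measure.map_apply hJ MeasurableSet.univ]
    simp
  intro s hs
  obtain ⟨I, S, hS, rfl⟩ := (mem_measurableCylinders s).1 hs
  have hcyl : MeasurableSet (cylinder I S) :=
    (measurable_pi_lambda (fun (g : ℤ → E) (i : I) => g i) fun i => measurable_pi_apply _) hS
  rw [Measure.map_apply hJ' hcyl, Measure.map_apply hJ hcyl]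
  set r := I.card with hr
  set e : Fin r ≃ {x // x ∈ I} := I.equivFin.symm with he
  set t : Fin r → ℤ := fun j => ((e j : {x // x ∈ I}) : ℤ) with ht
  set ρ : (Fin r → E) → (∀ _ : {x // x ∈ I}, E) := fun g i => g (I.equivFin i) with hρdef
  have hρ : Measurable ρ := measurable_pi_lambda _ fun i => measurable_pi_apply _
  have hkey : ∀ (i : {x // x ∈ I}), t (I.equivFin i) = (i : ℤ) := by
    intro i
    simp only [ht, he, Equiv.symm_apply_apply]
  have hpre : (fun ω (s : ℤ) => X s ω) ⁻¹' cylinder I S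
      = (fun ω j => X (t j) ω) ⁻¹' (ρ ⁻¹' S) := by
    ext ω
    simp only [Set.mem_preimage, mem_cylinder]
    have : ρ (fun j => X (t j) ω) = I.restrict (fun s => X s ω) := by
      funext i
      simp only [hρdef, Finset.restrict, hkey i]
    rw [this]
  have hpre' : (fun ω (s : ℤ) => X (s + η) ω) ⁻¹' cylinder I S
      = (fun ω j => X (t j + η) ω) ⁻¹' (ρ ⁻¹' S) := by
    ext ω
    simp only [Set.mem_preimage, mem_cylinder]
    have : ρ (fun j => X (t j + η) ω) = I.restrict (fun s => X (s + η) ω) := by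
      funext i
      simp only [hρdef, Finset.restrict, hkey i]
    rw [this]
  rw [hpre, hpre',
    ← Measure.map_apply (measurable_pi_lambda _ fun j => hXm _) (hρ hS),
    ← Measure.map_apply (measurable_pi_lambda _ fun j => hXm _) (hρ hS),
    hstat r t η]

lemma alphaMix_shift (X : ℤ → Ω → E) (hXm : ∀ t, Measurable (X t))
    (hstat : ∀ (r : ℕ) (t : Fin r → ℤ) (s : ℤ),
      Measure.map (fun ω => fun i => X (t i) ω) P
        = Measure.map (fun ω => fun i => X (t i + s) ω) P) (n η : ℤ) :
    alphaMix P (⨆ s : ℤ, ⨆ _ : s ≤ η, MeasurableSpace.comap (X s) mE)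
      (⨆ s : ℤ, ⨆ _ : n + η ≤ s, MeasurableSpace.comap (X s) mE) ≤ alphaProc P X n := by
  have hJ : Measurable (fun ω (s : ℤ) => X s ω) := measurable_pi_lambda _ hXm
  have hJ' : Measurable (fun ω (s : ℤ) => X (s + η) ω) :=
    measurable_pi_lambda _ fun s => hXm (s + η)
  have hmap := path_law_shift P X hXm hstat η
  -- rewrite σ-algebras
  have h1 : (⨆ s : ℤ, ⨆ _ : s ≤ η, MeasurableSpace.comap (X s) mE)
      = ⨆ s : ℤ, ⨆ _ : s ≤ 0, MeasurableSpace.comap (X (s + η)) mE := by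
    apply le_antisymm
    · refine iSup₂_le fun s hs => ?_
      have hle : s - η ≤ 0 := by omega
      have : MeasurableSpace.comap (X s) mE
          = MeasurableSpace.comap (X ((s - η) + η)) mE := by rw [sub_add_cancel]
      rw [this]
      exact le_iSup₂ (f := fun s' (_ : s' ≤ 0) => MeasurableSpace.comap (X (s' + η)) mE)
        (s - η) hle
    · refine iSup₂_le fun s hs => ?_
      exact le_iSup₂ (f := fun s' (_ : s' ≤ η) => MeasurableSpace.comap (X s') mE)
        (s + η) (by omega)
  have h2 : (⨆ s : ℤ, ⨆ _ : n + η ≤ s, MeasurableSpace.comap (X s) mE)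
      = ⨆ s : ℤ, ⨆ _ : n ≤ s, MeasurableSpace.comap (X (s + η)) mE := by
    apply le_antisymm
    · refine iSup₂_le fun s hs => ?_
      have : MeasurableSpace.comap (X s) mE
          = MeasurableSpace.comap (X ((s - η) + η)) mE := by rw [sub_add_cancel]
      rw [this]
      exact le_iSup₂ (f := fun s' (_ : n ≤ s') => MeasurableSpace.comap (X (s' + η)) mE)
        (s - η) (by omega)
    · refine iSup₂_le fun s hs => ?_
      exact le_iSup₂ (f := fun s' (_ : n + η ≤ s') => MeasurableSpace.comap (X s') mE)
        (s + η) (by omega)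
  rw [h1, h2, iSup_comap_eq (fun s => s ≤ 0) (fun s => X (s + η)),
    iSup_comap_eq (fun s => n ≤ s) (fun s => X (s + η))]
  unfold alphaProc
  rw [iSup_comap_eq (fun s => s ≤ 0) X, iSup_comap_eq (fun s => n ≤ s) X]
  refine alphaMix_le ?_
  intro A B hA hB
  obtain ⟨A₀, hA₀, rfl⟩ := MeasurableSpace.measurableSet_comap.1 hA
  obtain ⟨B₀, hB₀, rfl⟩ := MeasurableSpace.measurableSet_comap.1 hB
  set ρ₁ : (ℤ → E) → (Subtype (fun s : ℤ => s ≤ 0) → E) := fun g s => g s with hρ₁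
  set ρ₂ : (ℤ → E) → (Subtype (fun s : ℤ => n ≤ s) → E) := fun g s => g s with hρ₂
  have hρ₁m : Measurable ρ₁ := measurable_pi_lambda _ fun s => measurable_pi_apply _
  have hρ₂m : Measurable ρ₂ := measurable_pi_lambda _ fun s => measurable_pi_apply _
  have key : ∀ (S₁ : Set (Subtype (fun s : ℤ => s ≤ 0) → E))
      (S₂ : Set (Subtype (fun s : ℤ => n ≤ s) → E)), MeasurableSet S₁ → MeasurableSet S₂ →
      P ((fun ω (i : Subtype (fun s : ℤ => s ≤ 0)) => X ((i : ℤ) + η) ω) ⁻¹' S₁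
        ∩ (fun ω (i : Subtype (fun s : ℤ => n ≤ s)) => X ((i : ℤ) + η) ω) ⁻¹' S₂)
      = P ((fun ω (i : Subtype (fun s : ℤ => s ≤ 0)) => X (i : ℤ) ω) ⁻¹' S₁
        ∩ (fun ω (i : Subtype (fun s : ℤ => n ≤ s)) => X (i : ℤ) ω) ⁻¹' S₂) := by
    intro S₁ S₂ hS₁ hS₂
    have e1 : (fun ω (i : Subtype (fun s : ℤ => s ≤ 0)) => X ((i : ℤ) + η) ω) ⁻¹' S₁
        ∩ (fun ω (i : Subtype (fun s : ℤ => n ≤ s)) => X ((i : ℤ) + η) ω) ⁻¹' S₂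
        = (fun ω (s : ℤ) => X (s + η) ω) ⁻¹' (ρ₁ ⁻¹' S₁ ∩ ρ₂ ⁻¹' S₂) := rfl
    have e2 : (fun ω (i : Subtype (fun s : ℤ => s ≤ 0)) => X (i : ℤ) ω) ⁻¹' S₁
        ∩ (fun ω (i : Subtype (fun s : ℤ => n ≤ s)) => X (i : ℤ) ω) ⁻¹' S₂
        = (fun ω (s : ℤ) => X s ω) ⁻¹' (ρ₁ ⁻¹' S₁ ∩ ρ₂ ⁻¹' S₂) := rfl
    rw [e1, e2, ← Measure.map_apply hJ' ((hρ₁m hS₁).inter (hρ₂m hS₂)),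
      ← Measure.map_apply hJ ((hρ₁m hS₁).inter (hρ₂m hS₂)), hmap]
  have kA := key A₀ Set.univ hA₀ MeasurableSet.univ
  have kB := key Set.univ B₀ MeasurableSet.univ hB₀
  have kAB := key A₀ B₀ hA₀ hB₀
  simp only [Set.preimage_univ, Set.inter_univ, Set.univ_inter] at kA kB
  rw [kAB, kA, kB]
  exact le_alphaMix (P := P) ⟨A₀, hA₀, rfl⟩ ⟨B₀, hB₀, rfl⟩

end Shift

section RankOne
variable {W : Type*} [NormedAddCommGroup W] [InnerProductSpace ℝ W] [CompleteSpace W]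

lemma rankOne_norm_le (y x : W) : ‖rankOne y x‖ ≤ ‖y‖ * ‖x‖ := by
  unfold rankOne
  rw [ContinuousLinearMap.norm_smulRight_apply, innerSL_apply_norm]
  exact le_of_eq (mul_comm _ _)

lemma rankOne_continuous : Continuous (fun p : W × W => rankOne p.1 p.2) := by
  have h1 : Continuous (fun q : (W →L[ℝ] ℝ) × W =>
      ContinuousLinearMap.smulRightL ℝ W W q.1 q.2) :=
    (ContinuousLinearMap.smulRightL ℝ W W).continuous₂
  have h2 : Continuous (fun p : W × W => ((innerSL ℝ p.2 : W →L[ℝ] ℝ), p.1)) :=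
    ((innerSL ℝ).continuous.comp continuous_snd).prodMk continuous_fst
  exact h1.comp h2

lemma inner_rankOne_apply (y x u v : W) : ⟪u, rankOne y x v⟫ = ⟪x, v⟫ * ⟪y, u⟫ := by
  unfold rankOne
  rw [ContinuousLinearMap.smulRight_apply, real_inner_smul_right]
  rw [real_inner_comm u y]
  rfl

/-- operator-norm bound from a bilinear-form bound, on a Hilbert space -/
lemma opNorm_le_of_inner (T : W →L[ℝ] W) (K : ℝ) (hK : 0 ≤ K)
    (h : ∀ u v : W, |⟪u, T v⟫| ≤ K * ‖u‖ * ‖v‖) : ‖T‖ ≤ K := by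
  refine T.opNorm_le_bound hK fun v => ?_
  by_cases h0 : ‖T v‖ = 0
  · rw [h0]; positivity
  · have hpos : 0 < ‖T v‖ := lt_of_le_of_ne (norm_nonneg _) (Ne.symm h0)
    have h2 := h (T v) v
    rw [real_inner_self_eq_norm_mul_norm, abs_of_nonneg (by positivity)] at h2
    nlinarith

end RankOne

theorem longrun_covariance_norm_bound
    {Ω : Type*} [MeasurableSpace Ω] (P : Measure Ω) [IsProbabilityMeasure P]
    {E : Type*} [TopologicalSpace E] [PolishSpace E] [MeasurableSpace E] [BorelSpace E]
    {H : Type*} [NormedAddCommGroup H] [InnerProductSpace ℝ H] [CompleteSpace H]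
      [SecondCountableTopology H] [MeasurableSpace H] [BorelSpace H]
    {W : Type*} [NormedAddCommGroup W] [InnerProductSpace ℝ W] [CompleteSpace W]
      [SecondCountableTopology W]
    -- the stationary process
    (X : ℤ → Ω → E) (hXm : ∀ t, Measurable (X t))
    (hstat : ∀ (r : ℕ) (t : Fin r → ℤ) (s : ℤ),
      Measure.map (fun ω => fun i => X (t i) ω) P
        = Measure.map (fun ω => fun i => X (t i + s) ω) P)
    -- α-mixing
    (hmix : Tendsto (fun n : ℕ => alphaProc P X n) atTop (𝓝 0))
    -- feature map, kernel bound sup_x k(x,x) = c, centering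
    (φ : E → H) (hφ : Measurable φ) (c : ℝ)
    (hc : ∀ x : E, ⟪φ x, φ x⟫ ≤ c)
    (hcent : ∫ ω, φ (X 0 ω) ∂P = 0)
    -- the rank-one tensor map into W = HS(H)
    (tensor : H →L[ℝ] H →L[ℝ] W)
    (htensor : ∀ a b c d : H, ⟪tensor a b, tensor c d⟫ = ⟪a, c⟫ * ⟪b, d⟫)
    -- the time lag and M = ∑_{t≥1} α(t − η)
    (η : ℕ) (M : ℝ)
    (hM : HasSum (fun t : ℕ => alphaProc P X ((t : ℤ) + 1 - η)) M) :
    Summable (fun t : ℕ =>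
      ∫ ω, rankOne (xi P X φ tensor η 0 ω) (xi P X φ tensor η (t + 1) ω) ∂P) ∧
    Summable (fun t : ℕ =>
      ∫ ω, rankOne (xi P X φ tensor η (t + 1) ω) (xi P X φ tensor η 0 ω) ∂P) ∧
    ‖∫ ω, rankOne (xi P X φ tensor η 0 ω) (xi P X φ tensor η 0 ω) ∂P‖
      ≤ 4 * c ^ 2 ∧
    ‖∑' t : ℕ, ∫ ω, rankOne (xi P X φ tensor η (t + 1) ω) (xi P X φ tensor η 0 ω) ∂P‖
      ≤ 16 * c ^ 2 * M ∧
    ‖∑' t : ℕ, ∫ ω, rankOne (xi P X φ tensor η 0 ω) (xi P X φ tensor η (t + 1) ω) ∂P‖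
      ≤ 16 * c ^ 2 * M ∧
    ‖(∫ ω, rankOne (xi P X φ tensor η 0 ω) (xi P X φ tensor η 0 ω) ∂P)
        + (∑' t : ℕ,
            ∫ ω, rankOne (xi P X φ tensor η 0 ω) (xi P X φ tensor η (t + 1) ω) ∂P)
        + (∑' t : ℕ,
            ∫ ω, rankOne (xi P X φ tensor η (t + 1) ω) (xi P X φ tensor η 0 ω) ∂P)‖
      ≤ 4 * c ^ 2 + 32 * c ^ 2 * M := by
  classical
  -- basic facts
  have hNe : Nonempty Ω := by
    rcases isEmpty_or_nonempty Ω with h | h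
    · exfalso
      have h1 : P Set.univ = 1 := measure_univ
      rw [Set.univ_eq_empty_iff.mpr h] at h1
      simp at h1
    · exact h
  obtain ⟨ω₀⟩ := hNe
  have hc0 : 0 ≤ c := le_trans real_inner_self_nonneg (hc (X 0 ω₀))
  have hφn : ∀ x : E, ‖φ x‖ ≤ Real.sqrt c := by
    intro x
    rw [norm_eq_sqrt_real_inner]
    exact Real.sqrt_le_sqrt (hc x)
  have htn : ∀ a b : H, ‖tensor a b‖ = ‖a‖ * ‖b‖ := by
    intro a b
    rw [norm_eq_sqrt_real_inner, htensor a b a b, real_inner_self_eq_norm_mul_norm,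
      real_inner_self_eq_norm_mul_norm,
      show ‖a‖ * ‖a‖ * (‖b‖ * ‖b‖) = ‖a‖ * ‖b‖ * (‖a‖ * ‖b‖) by ring,
      Real.sqrt_mul_self (by positivity)]
  have hGb : ∀ p q : E, ‖tensor (φ p) (φ q)‖ ≤ c := by
    intro p q
    rw [htn]
    calc ‖φ p‖ * ‖φ q‖ ≤ Real.sqrt c * Real.sqrt c :=
          mul_le_mul (hφn p) (hφn q) (norm_nonneg _) (Real.sqrt_nonneg c)
      _ = c := Real.mul_self_sqrt hc0
  have hφX : ∀ s : ℤ, Measurable fun ω => φ (X s ω) := fun s => hφ.comp (hXm s)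
  have hGsm : ∀ s s' : ℤ, StronglyMeasurable (fun ω => tensor (φ (X s ω)) (φ (X s' ω))) := by
    intro s s'
    have hpair : StronglyMeasurable (fun ω => (φ (X s ω), φ (X s' ω))) :=
      ((hφX s).prodMk (hφX s')).stronglyMeasurable
    exact (show Continuous fun p : H × H => tensor p.1 p.2 from tensor.continuous₂
      ).comp_stronglyMeasurable hpair
  have hGint : ∀ s s' : ℤ, Integrable (fun ω => tensor (φ (X s ω)) (φ (X s' ω))) P :=
    fun s s' => ⟨(hGsm s s').aestronglyMeasurable,
      HasFiniteIntegral.of_bounded (C := c) (ae_of_all _ fun ω => by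
        simpa using hGb (X s ω) (X s' ω))⟩
  have hCn : ‖Ceta P X φ tensor (η : ℤ)‖ ≤ c := by
    unfold Ceta
    have := norm_integral_le_of_norm_le_const (μ := P)
      (f := fun ω => tensor (φ (X (η : ℤ) ω)) (φ (X 0 ω))) (C := c)
      (ae_of_all _ fun ω => by simpa using hGb (X (η:ℤ) ω) (X 0 ω))
    simpa using this
  -- Ξ notation
  set Ξ : ℤ → Ω → W := xi P X φ tensor (η : ℤ) with hΞ
  have hΞdef : ∀ t ω, Ξ t ω = tensor (φ (X (t + η) ω)) (φ (X t ω)) - Ceta P X φ tensor (η:ℤ) :=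
    fun t ω => rfl
  have hξsm : ∀ t : ℤ, StronglyMeasurable (Ξ t) := fun t => (hGsm (t+η) t).sub
    stronglyMeasurable_const
  have hξb : ∀ (t : ℤ) ω, ‖Ξ t ω‖ ≤ 2 * c := by
    intro t ω
    rw [hΞdef]
    calc ‖tensor (φ (X (t + η) ω)) (φ (X t ω)) - Ceta P X φ tensor (η:ℤ)‖
        ≤ ‖tensor (φ (X (t + η) ω)) (φ (X t ω))‖ + ‖Ceta P X φ tensor (η:ℤ)‖ := norm_sub_le _ _
      _ ≤ c + c := add_le_add (hGb _ _) hCn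
      _ = 2 * c := by ring
  have hξint : ∀ t : ℤ, Integrable (Ξ t) P := fun t =>
    ⟨(hξsm t).aestronglyMeasurable,
      HasFiniteIntegral.of_bounded (C := 2*c) (ae_of_all _ fun ω => by
        simpa using hξb t ω)⟩
  -- stationarity: E[G_t] = C(η), so E[Ξ_t] = 0
  have hGC : ∀ t : ℤ, ∫ ω, tensor (φ (X (t + η) ω)) (φ (X t ω)) ∂P = Ceta P X φ tensor (η:ℤ) := by
    intro t
    set F : (Fin 2 → E) → W := fun g => tensor (φ (g 0)) (φ (g 1)) with hF
    have hFsm : StronglyMeasurable F := by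
      have hpair : Measurable (fun g : Fin 2 → E => (φ (g 0), φ (g 1))) :=
        (hφ.comp (measurable_pi_apply 0)).prodMk (hφ.comp (measurable_pi_apply 1))
      exact (show Continuous fun p : H × H => tensor p.1 p.2 from tensor.continuous₂
        ).comp_stronglyMeasurable hpair.stronglyMeasurable
    set tv : Fin 2 → ℤ := ![(η : ℤ), 0] with htv
    have htv0 : tv 0 = (η : ℤ) := rfl
    have htv1 : tv 1 = 0 := rfl
    have hmap := hstat 2 tv t
    have hm1 : Measurable (fun ω => fun i => X (tv i) ω) :=
      measurable_pi_lambda _ fun i => hXm _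
    have hm2 : Measurable (fun ω => fun i => X (tv i + t) ω) :=
      measurable_pi_lambda _ fun i => hXm _
    have e1 : ∫ ω, tensor (φ (X (t + η) ω)) (φ (X t ω)) ∂P
        = ∫ ω, F (fun i => X (tv i + t) ω) ∂P := by
      refine integral_congr_ae (ae_of_all _ fun ω => ?_)
      simp only [hF]
      rw [htv0, htv1, zero_add, add_comm (η : ℤ) t]
    have e2 : Ceta P X φ tensor (η : ℤ) = ∫ ω, F (fun i => X (tv i) ω) ∂P := by
      unfold Ceta
      refine integral_congr_ae (ae_of_all _ fun ω => ?_)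
      simp only [hF]
      rw [htv0, htv1]
    rw [e1, e2]
    rw [← integral_map hm2.aemeasurable (hFsm.aestronglyMeasurable),
      ← integral_map hm1.aemeasurable (hFsm.aestronglyMeasurable), hmap]
  have hξ0 : ∀ t : ℤ, ∫ ω, Ξ t ω ∂P = 0 := by
    intro t
    have : ∫ ω, Ξ t ω ∂P
        = (∫ ω, tensor (φ (X (t + η) ω)) (φ (X t ω)) ∂P) - Ceta P X φ tensor (η:ℤ) := by
      simp only [hΞ, xi]
      rw [integral_sub (hGint (t+η) t) (integrable_const _), integral_const]
      simp
    rw [this, hGC t, sub_self]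
  -- operator-valued integrands
  have hOsm : ∀ a b : ℤ, StronglyMeasurable (fun ω => rankOne (Ξ a ω) (Ξ b ω)) := fun a b =>
    rankOne_continuous.comp_stronglyMeasurable ((hξsm a).prodMk (hξsm b))
  have hOint : ∀ a b : ℤ, Integrable (fun ω => rankOne (Ξ a ω) (Ξ b ω)) P := by
    intro a b
    refine ⟨(hOsm a b).aestronglyMeasurable, HasFiniteIntegral.of_bounded
      (C := (2*c)*(2*c)) (ae_of_all _ fun ω => ?_)⟩
    calc ‖rankOne (Ξ a ω) (Ξ b ω)‖ ≤ ‖Ξ a ω‖ * ‖Ξ b ω‖ := rankOne_norm_le _ _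
      _ ≤ (2*c) * (2*c) := mul_le_mul (hξb a ω) (hξb b ω) (norm_nonneg _) (by positivity)
  -- bilinear form of the integrated operator
  have hApply : ∀ (a b : ℤ) (u v : W),
      ⟪u, (∫ ω, rankOne (Ξ a ω) (Ξ b ω) ∂P) v⟫ = ∫ ω, ⟪Ξ b ω, v⟫ * ⟪Ξ a ω, u⟫ ∂P := by
    intro a b u v
    rw [ContinuousLinearMap.integral_apply (hOint a b) v]
    rw [← integral_inner ((hOint a b).apply_continuousLinearMap v) u]
    exact integral_congr_ae (ae_of_all _ fun ω => inner_rankOne_apply _ _ _ _)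
  -- measurability of inner functionals wrt sub-σ-algebras
  have hinner_sm : ∀ (m' : MeasurableSpace Ω) (s s' : ℤ),
      (@Measurable Ω E m' _ (X s)) → (@Measurable Ω E m' _ (X s')) → ∀ q z : W,
      @StronglyMeasurable Ω ℝ _ m'
        (fun ω => ⟪tensor (φ (X s ω)) (φ (X s' ω)) - z, q⟫) := by
    intro m' s s' hs hs' q z
    have hcont : Continuous (fun hh : H × H => (⟪tensor hh.1 hh.2 - z, q⟫ : ℝ)) :=
      Continuous.inner ((show Continuous fun p : H × H => tensor p.1 p.2 from
        tensor.continuous₂).sub continuous_const) continuous_const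
    have hgm : @Measurable (E × E) ℝ _ _ (fun pq : E × E =>
        (⟪tensor (φ pq.1) (φ pq.2) - z, q⟫ : ℝ)) :=
      hcont.measurable.comp ((hφ.comp measurable_fst).prodMk (hφ.comp measurable_snd))
    exact (hgm.comp (hs.prodMk hs')).stronglyMeasurable
  -- zero mean of inner functionals
  have hinner0 : ∀ (a : ℤ) (q : W), ∫ ω, ⟪Ξ a ω, q⟫ ∂P = 0 := by
    intro a q
    rw [show (fun ω => (⟪Ξ a ω, q⟫ : ℝ)) = fun ω => ⟪q, Ξ a ω⟫ from
      funext fun ω => real_inner_comm _ _]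
    rw [integral_inner (hξint a) q, hξ0 a, inner_zero_right]
  have hinnerb : ∀ (a : ℤ) (q : W) (ω : Ω), |(⟪Ξ a ω, q⟫ : ℝ)| ≤ 2 * c * ‖q‖ := fun a q ω =>
    (abs_real_inner_le_norm _ _).trans (mul_le_mul_of_nonneg_right (hξb a ω) (norm_nonneg q))
  -- key covariance estimate
  have key : ∀ (t : ℕ) (p q : W),
      |∫ ω, ⟪Ξ ((t:ℤ) + 1) ω, p⟫ * ⟪Ξ 0 ω, q⟫ ∂P|
        ≤ 16 * c^2 * alphaProc P X ((t:ℤ) + 1 - η) * ‖p‖ * ‖q‖ := by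
    intro t p q
    have hm₁ : (⨆ s : ℤ, ⨆ _ : s ≤ (η:ℤ), MeasurableSpace.comap (X s)
        (inferInstance : MeasurableSpace E)) ≤ _ :=
      iSup₂_le fun s _ => (hXm s).comap_le
    have hm₂ : (⨆ s : ℤ, ⨆ _ : ((t:ℤ)+1) ≤ s, MeasurableSpace.comap (X s)
        (inferInstance : MeasurableSpace E)) ≤ _ :=
      iSup₂_le fun s _ => (hXm s).comap_le
    have hU : StronglyMeasurable[⨆ s : ℤ, ⨆ _ : s ≤ (η:ℤ), MeasurableSpace.comap (X s)
        (inferInstance : MeasurableSpace E)] (fun ω => (⟪Ξ 0 ω, q⟫ : ℝ)) := by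
      have h1 : MeasurableSpace.comap (X (0 + (η:ℤ))) (inferInstance : MeasurableSpace E)
          ≤ ⨆ s : ℤ, ⨆ _ : s ≤ (η:ℤ), MeasurableSpace.comap (X s) inferInstance :=
        le_iSup₂ (f := fun (s : ℤ) (_ : s ≤ (η:ℤ)) =>
          MeasurableSpace.comap (X s) inferInstance) (0 + (η:ℤ)) (by omega)
      have h2 : MeasurableSpace.comap (X 0) (inferInstance : MeasurableSpace E)
          ≤ ⨆ s : ℤ, ⨆ _ : s ≤ (η:ℤ), MeasurableSpace.comap (X s) inferInstance :=
        le_iSup₂ (f := fun (s : ℤ) (_ : s ≤ (η:ℤ)) =>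
          MeasurableSpace.comap (X s) inferInstance) 0 (by omega)
      exact hinner_sm _ (0 + (η:ℤ)) 0 (Measurable.of_comap_le h1)
        (Measurable.of_comap_le h2) q _
    have hV : StronglyMeasurable[⨆ s : ℤ, ⨆ _ : ((t:ℤ)+1) ≤ s, MeasurableSpace.comap (X s)
        (inferInstance : MeasurableSpace E)] (fun ω => (⟪Ξ ((t:ℤ)+1) ω, p⟫ : ℝ)) := by
      have h1 : MeasurableSpace.comap (X ((t:ℤ)+1 + (η:ℤ))) (inferInstance : MeasurableSpace E)
          ≤ ⨆ s : ℤ, ⨆ _ : ((t:ℤ)+1) ≤ s, MeasurableSpace.comap (X s) inferInstance :=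
        le_iSup₂ (f := fun (s : ℤ) (_ : ((t:ℤ)+1) ≤ s) =>
          MeasurableSpace.comap (X s) inferInstance) ((t:ℤ)+1 + (η:ℤ)) (by omega)
      have h2 : MeasurableSpace.comap (X ((t:ℤ)+1)) (inferInstance : MeasurableSpace E)
          ≤ ⨆ s : ℤ, ⨆ _ : ((t:ℤ)+1) ≤ s, MeasurableSpace.comap (X s) inferInstance :=
        le_iSup₂ (f := fun (s : ℤ) (_ : ((t:ℤ)+1) ≤ s) =>
          MeasurableSpace.comap (X s) inferInstance) ((t:ℤ)+1) (by omega)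
      exact hinner_sm _ ((t:ℤ)+1 + (η:ℤ)) ((t:ℤ)+1) (Measurable.of_comap_le h1)
        (Measurable.of_comap_le h2) p _
    have ib := ibragimov (P := P) hm₁ hm₂ hU hV
      (fun ω => hinnerb 0 q ω) (fun ω => hinnerb ((t:ℤ)+1) p ω)
      (hinner0 0 q) (hinner0 ((t:ℤ)+1) p)
    rw [show (fun ω => (⟪Ξ ((t:ℤ)+1) ω, p⟫ : ℝ) * ⟪Ξ 0 ω, q⟫)
      = fun ω => (⟪Ξ 0 ω, q⟫ : ℝ) * ⟪Ξ ((t:ℤ)+1) ω, p⟫ from funext fun ω => mul_comm _ _]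
    have hshift := alphaMix_shift P X hXm hstat ((t:ℤ)+1-(η:ℤ)) (η:ℤ)
    rw [show ((t:ℤ)+1-(η:ℤ)) + (η:ℤ) = (t:ℤ)+1 by ring] at hshift
    calc |∫ ω, (⟪Ξ 0 ω, q⟫ : ℝ) * ⟪Ξ ((t:ℤ)+1) ω, p⟫ ∂P|
        ≤ 4 * (2*c*‖q‖) * (2*c*‖p‖) * alphaMix P _ _ := ib
      _ = (16 * c^2 * ‖p‖ * ‖q‖) * alphaMix P _ _ := by ring
      _ ≤ (16 * c^2 * ‖p‖ * ‖q‖) * alphaProc P X ((t:ℤ)+1-(η:ℤ)) :=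
          mul_le_mul_of_nonneg_left hshift (by positivity)
      _ = 16 * c^2 * alphaProc P X ((t:ℤ)+1-(η:ℤ)) * ‖p‖ * ‖q‖ := by ring
  -- nonnegativity of mixing coefficients
  have hαnn : ∀ t : ℕ, 0 ≤ alphaProc P X ((t:ℤ)+1-η) := by
    intro t
    unfold alphaProc
    exact alphaMix_nonneg
  -- per-term operator norm bounds
  have hS1 : ∀ t : ℕ, ‖∫ ω, rankOne (Ξ 0 ω) (Ξ ((t:ℤ)+1) ω) ∂P‖
      ≤ 16 * c^2 * alphaProc P X ((t:ℤ)+1-η) := by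
    intro t
    refine opNorm_le_of_inner _ _ (by nlinarith [hαnn t, sq_nonneg c]) fun u v => ?_
    rw [hApply 0 ((t:ℤ)+1) u v]
    calc |∫ ω, (⟪Ξ ((t:ℤ)+1) ω, v⟫ : ℝ) * ⟪Ξ 0 ω, u⟫ ∂P|
        ≤ 16 * c^2 * alphaProc P X ((t:ℤ)+1-η) * ‖v‖ * ‖u‖ := key t v u
      _ = 16 * c^2 * alphaProc P X ((t:ℤ)+1-η) * ‖u‖ * ‖v‖ := by ring
  have hS2 : ∀ t : ℕ, ‖∫ ω, rankOne (Ξ ((t:ℤ)+1) ω) (Ξ 0 ω) ∂P‖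
      ≤ 16 * c^2 * alphaProc P X ((t:ℤ)+1-η) := by
    intro t
    refine opNorm_le_of_inner _ _ (by nlinarith [hαnn t, sq_nonneg c]) fun u v => ?_
    rw [hApply ((t:ℤ)+1) 0 u v]
    rw [show (fun ω => (⟪Ξ 0 ω, v⟫ : ℝ) * ⟪Ξ ((t:ℤ)+1) ω, u⟫)
      = fun ω => (⟪Ξ ((t:ℤ)+1) ω, u⟫ : ℝ) * ⟪Ξ 0 ω, v⟫ from funext fun ω => mul_comm _ _]
    exact key t u v
  -- diagonal bound
  have hDiag : ‖∫ ω, rankOne (Ξ 0 ω) (Ξ 0 ω) ∂P‖ ≤ 4 * c^2 := by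
    have hb := norm_integral_le_of_norm_le_const (μ := P)
      (f := fun ω => rankOne (Ξ 0 ω) (Ξ 0 ω)) (C := (2*c)*(2*c))
      (ae_of_all _ fun ω => (rankOne_norm_le _ _).trans
        (mul_le_mul (hξb 0 ω) (hξb 0 ω) (norm_nonneg _) (by positivity)))
    calc ‖∫ ω, rankOne (Ξ 0 ω) (Ξ 0 ω) ∂P‖ ≤ (2*c)*(2*c) := by simpa using hb
      _ = 4 * c^2 := by ring
  -- summability
  have hBhs : HasSum (fun t : ℕ => 16 * c^2 * alphaProc P X ((t:ℤ)+1-η)) (16 * c^2 * M) :=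
    hM.mul_left _
  have hBsum : Summable (fun t : ℕ => 16 * c^2 * alphaProc P X ((t:ℤ)+1-η)) := hBhs.summable
  have hsum1 : Summable (fun t : ℕ => ∫ ω, rankOne (Ξ 0 ω) (Ξ ((t:ℤ)+1) ω) ∂P) :=
    Summable.of_norm_bounded hBsum hS1
  have hsum2 : Summable (fun t : ℕ => ∫ ω, rankOne (Ξ ((t:ℤ)+1) ω) (Ξ 0 ω) ∂P) :=
    Summable.of_norm_bounded hBsum hS2
  have hns1 : Summable (fun t : ℕ => ‖∫ ω, rankOne (Ξ 0 ω) (Ξ ((t:ℤ)+1) ω) ∂P‖) :=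
    Summable.of_nonneg_of_le (fun _ => norm_nonneg _) hS1 hBsum
  have hns2 : Summable (fun t : ℕ => ‖∫ ω, rankOne (Ξ ((t:ℤ)+1) ω) (Ξ 0 ω) ∂P‖) :=
    Summable.of_nonneg_of_le (fun _ => norm_nonneg _) hS2 hBsum
  have ht1 : ‖∑' t : ℕ, ∫ ω, rankOne (Ξ 0 ω) (Ξ ((t:ℤ)+1) ω) ∂P‖ ≤ 16 * c^2 * M := by
    calc ‖∑' t : ℕ, ∫ ω, rankOne (Ξ 0 ω) (Ξ ((t:ℤ)+1) ω) ∂P‖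
        ≤ ∑' t : ℕ, ‖∫ ω, rankOne (Ξ 0 ω) (Ξ ((t:ℤ)+1) ω) ∂P‖ := norm_tsum_le_tsum_norm hns1
      _ ≤ ∑' t : ℕ, 16 * c^2 * alphaProc P X ((t:ℤ)+1-η) := Summable.tsum_le_tsum hS1 hns1 hBsum
      _ = 16 * c^2 * M := hBhs.tsum_eq
  have ht2 : ‖∑' t : ℕ, ∫ ω, rankOne (Ξ ((t:ℤ)+1) ω) (Ξ 0 ω) ∂P‖ ≤ 16 * c^2 * M := by
    calc ‖∑' t : ℕ, ∫ ω, rankOne (Ξ ((t:ℤ)+1) ω) (Ξ 0 ω) ∂P‖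
        ≤ ∑' t : ℕ, ‖∫ ω, rankOne (Ξ ((t:ℤ)+1) ω) (Ξ 0 ω) ∂P‖ := norm_tsum_le_tsum_norm hns2
      _ ≤ ∑' t : ℕ, 16 * c^2 * alphaProc P X ((t:ℤ)+1-η) := Summable.tsum_le_tsum hS2 hns2 hBsum
      _ = 16 * c^2 * M := hBhs.tsum_eq
  refine ⟨hsum1, hsum2, hDiag, ht2, ht1, ?_⟩
  have htri := norm_add_le ((∫ ω, rankOne (Ξ 0 ω) (Ξ 0 ω) ∂P)
      + (∑' t : ℕ, ∫ ω, rankOne (Ξ 0 ω) (Ξ ((t:ℤ)+1) ω) ∂P))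
    (∑' t : ℕ, ∫ ω, rankOne (Ξ ((t:ℤ)+1) ω) (Ξ 0 ω) ∂P)
  have htri2 := norm_add_le (∫ ω, rankOne (Ξ 0 ω) (Ξ 0 ω) ∂P)
    (∑' t : ℕ, ∫ ω, rankOne (Ξ 0 ω) (Ξ ((t:ℤ)+1) ω) ∂P)
  linarith
end
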